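/- arXiv:2009.08678 — 4 statements merged into one kernel-verified Lean document; each statement's English description precedes it below -/
import Mathlib

section
/- With probability one, liminf_{N→∞} M_N / log_{1/√(pq)} N ≥ 1. -/
open MeasureTheory ProbabilityTheory Filter
open scoped Classical

/-- `switchCount X n m ω` is the number of switches `S_n^{(m)}` in the `n` trials
`X_m, …, X_{m+n-1}`. -/
def switchCount {Ω : Type*} (X : ℕ → Ω → ℕ) (n m : ℕ) (ω : Ω) : ℕ :=
  ∑ i ∈ Finset.Icc (m + 1) (n + m - 1),
    ((1 - X (i - 1) ω) * X i ω + X (i - 1) ω * (1 - X i ω))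

/-- `longestSwitch X N m ω` is `M_N^{(m)}`, the length of the longest run of consecutive
switches in the trials `X_m, …, X_{m+N-1}`. -/
noncomputable def longestSwitch {Ω : Type*} (X : ℕ → Ω → ℕ) (N m : ℕ) (ω : Ω) : ℕ :=
  ((Finset.Icc 1 N).filter fun n =>
      ∃ i ∈ Finset.Icc m (m + N - n + 1), switchCount X n i ω = n - 1).sup
    fun n => n - 1

/-!
Lower bound: cut `X₁, …, X_N` into `⌊N / k⌋` disjoint blocks of even length
`k ≈ (1 - ε) log_{1/√(pq)} N`. A block alternates with probability `(pq) ^ (k / 2) = √(pq) ^ k`,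
which is at least `√(pq) ^ 4 N ^ (ε - 1)`, independently of the other blocks, so none of them
alternates with probability at most `exp (-⌊N / k⌋ √(pq) ^ k) ≤ N⁻²` for large `N`. By
Borel–Cantelli, almost surely `(1 - ε) log_{1/√(pq)} N ≤ M_N` eventually.

Upper bound: a union bound over the `2N` alternating windows of length `≈ 3 log_{1/√(pq)} N`
shows that almost surely `M_N ≤ 3 log_{1/√(pq)} N + 2` eventually. It is needed because the
real `liminf` of a sequence tending to `+∞` is the junk value `0`.
-/

open Finset Real Topology

section Switches

variable {Ω : Type*} {X : ℕ → Ω → ℕ}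

def alternatingOn (X : ℕ → Ω → ℕ) (ξ : ℕ) (s : Finset ℕ) : Set Ω :=
  {ω | ∀ i ∈ s, X i ω = (ξ + i) % 2}

lemma switch_term_eq {u v : ℕ} (hu : u ≤ 1) (hv : v ≤ 1) :
    (1 - u) * v + u * (1 - v) = if u = v then 0 else 1 := by
  interval_cases u <;> interval_cases v <;> rfl

lemma switchCount_eq_sub_one_iff (hval : ∀ i ω, X i ω ≤ 1) {n m : ℕ} {ω : Ω} :
    switchCount X n m ω = n - 1 ↔ ∀ i ∈ Icc (m + 1) (n + m - 1), X (i - 1) ω ≠ X i ω := by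
  have hcount : switchCount X n m ω = #{i ∈ Icc (m + 1) (n + m - 1) | X (i - 1) ω ≠ X i ω} := by
    rw [card_filter, switchCount]
    refine sum_congr rfl fun i _ => ?_
    rw [switch_term_eq (hval _ _) (hval _ _), ite_not]
  have hcard : #(Icc (m + 1) (n + m - 1)) = n - 1 := by
    rw [Nat.card_Icc]; omega
  rw [hcount, ← hcard, card_filter_eq_iff]

lemma exists_alternating_of_forall_ne {f : ℕ → ℕ} (hf : ∀ i, f i ≤ 1) {a n : ℕ}
    (h : ∀ i ∈ Icc (a + 1) (n + a - 1), f (i - 1) ≠ f i) :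
    ∃ ξ ∈ range 2, ∀ i ∈ Ico a (a + n), f i = (ξ + i) % 2 := by
  refine ⟨(f a + a) % 2, mem_range.2 (Nat.mod_lt _ two_pos), ?_⟩
  suffices ∀ t < n, f (a + t) = ((f a + a) % 2 + (a + t)) % 2 by
    intro i hi
    obtain ⟨hai, hin⟩ := mem_Ico.1 hi
    simpa [Nat.add_sub_cancel' hai] using this (i - a) (by omega)
  intro t ht
  induction t with
  | zero => have := hf a; simp only [Nat.add_zero]; omega
  | succ t ih =>
    have hne := h (a + t + 1) (mem_Icc.2 ⟨by omega, by omega⟩)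
    have := ih (by omega)
    have := hf (a + t); have := hf (a + t + 1)
    simp only [Nat.add_sub_cancel] at hne
    rw [← Nat.add_assoc]
    omega

lemma forall_ne_of_mem_alternatingOn {ξ a n : ℕ} {ω : Ω}
    (h : ω ∈ alternatingOn X ξ (Ico a (a + n))) :
    ∀ i ∈ Icc (a + 1) (n + a - 1), X (i - 1) ω ≠ X i ω := by
  intro i hi
  obtain ⟨hai, hin⟩ := mem_Icc.1 hi
  rw [h (i - 1) (mem_Ico.2 ⟨by omega, by omega⟩), h i (mem_Ico.2 ⟨by omega, by omega⟩)]
  omega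

lemma le_longestSwitch_of_mem_alternatingOn (hval : ∀ i ω, X i ω ≤ 1) {ξ a n N : ℕ} {ω : Ω}
    (h : ω ∈ alternatingOn X ξ (Ico a (a + n))) (ha : 1 ≤ a) (hn : 1 ≤ n) (hN : a + n ≤ N + 1) :
    n - 1 ≤ longestSwitch X N 1 ω := by
  unfold longestSwitch
  apply le_sup (f := fun n => n - 1)
  simp only [mem_filter]
  refine ⟨mem_Icc.2 ⟨hn, by omega⟩, a, mem_Icc.2 ⟨ha, by omega⟩, ?_⟩
  exact (switchCount_eq_sub_one_iff hval).2 (forall_ne_of_mem_alternatingOn h)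

lemma exists_mem_alternatingOn_of_lt_longestSwitch (hval : ∀ i ω, X i ω ≤ 1) {m N : ℕ}
    {ω : Ω} (h : m < longestSwitch X N 1 ω) :
    ∃ a ∈ Icc 1 N, ∃ ξ ∈ range 2, ω ∈ alternatingOn X ξ (Ico a (a + (m + 2))) := by
  obtain ⟨n, hn, hmn⟩ := Finset.lt_sup_iff.1 h
  simp only [mem_filter] at hn
  obtain ⟨hnN, a, ha, hsw⟩ := hn
  obtain ⟨hn1, hnN⟩ := mem_Icc.1 hnN
  obtain ⟨ha1, haN⟩ := mem_Icc.1 ha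
  obtain ⟨ξ, hξ, halt⟩ :=
    exists_alternating_of_forall_ne (hval · ω) ((switchCount_eq_sub_one_iff hval).1 hsw)
  exact ⟨a, mem_Icc.2 ⟨ha1, by omega⟩, ξ, hξ, fun i hi =>
    halt i (Ico_subset_Ico_right (by omega) hi)⟩

end Switches

section Independence

open Function

variable {Ω ι κ β : Type*} [MeasurableSpace Ω] {μ : Measure Ω} [MeasurableSpace β]
  [MeasurableSingletonClass β] {X : ι → Ω → β}

lemma measure_setOf_forall_eq_prod (hindep : iIndepFun X μ) (s : Finset ι) (g : ι → β) :
    μ {ω | ∀ i ∈ s, X i ω = g i} = ∏ i ∈ s, μ {ω | X i ω = g i} := by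
  have h := hindep.measure_inter_preimage_eq_mul s (sets := fun i => {g i})
    fun i _ => measurableSet_singleton _
  simpa [Set.preimage, Set.ofPred_forall] using h

lemma measurableSet_setOf_forall_eq (hmeas : ∀ i, Measurable (X i)) (s : Finset ι) (g : ι → β) :
    MeasurableSet {ω | ∀ i ∈ s, X i ω = g i} := by
  simp only [Set.ofPred_forall]
  exact Finset.measurableSet_biInter s fun i _ => hmeas i (measurableSet_singleton _)

lemma iIndepSet_setOf_forall_eq (hmeas : ∀ i, Measurable (X i)) (hindep : iIndepFun X μ)
    {B : κ → Finset ι} (hB : Pairwise (Disjoint on B)) (g : ι → β) :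
    iIndepSet (fun j => {ω | ∀ i ∈ B j, X i ω = g i}) μ := by
  rw [iIndepSet_iff_meas_biInter fun j => measurableSet_setOf_forall_eq hmeas (B j) g]
  intro S
  have hunion : ⋂ j ∈ S, {ω | ∀ i ∈ B j, X i ω = g i}
      = {ω | ∀ i ∈ S.biUnion B, X i ω = g i} := by
    ext ω
    simp only [Set.mem_iInter, Set.mem_ofPred_eq, mem_biUnion, forall_exists_index, and_imp]
    exact ⟨fun h i j hj hi => h j hj i hi, fun h j hj i hi => h i j hj hi⟩
  rw [hunion, measure_setOf_forall_eq_prod hindep, prod_biUnion fun j _ j' _ h => hB h]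
  exact prod_congr rfl fun j _ => (measure_setOf_forall_eq_prod hindep _ g).symm

variable [IsProbabilityMeasure μ]

lemma measure_biInter_compl_le_exp {E : κ → Set Ω} (hE : iIndepSet E μ)
    (hmE : ∀ j, MeasurableSet (E j)) {a : ℝ} (ha : 0 ≤ a)
    (hEa : ∀ j, ENNReal.ofReal a ≤ μ (E j)) (S : Finset κ) :
    μ (⋂ j ∈ S, (E j)ᶜ) ≤ ENNReal.ofReal (exp (-(#S * a))) := by
  have hcompl : ∀ j ∈ S,
      MeasurableSet[MeasurableSpace.generateFrom {E j}] (E j)ᶜ := fun j _ =>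
    (MeasurableSpace.measurableSet_generateFrom (Set.mem_singleton _)).compl
  have hle : ∀ j, μ (E j)ᶜ ≤ ENNReal.ofReal (exp (-a)) := fun j => by
    rw [prob_compl_eq_one_sub (hmE j), tsub_le_iff_right]
    calc (1 : ENNReal) ≤ ENNReal.ofReal (exp (-a) + a) := by
          rw [ENNReal.one_le_ofReal]; linarith [add_one_le_exp (-a)]
      _ ≤ ENNReal.ofReal (exp (-a)) + μ (E j) := by
          rw [ENNReal.ofReal_add (exp_pos _).le ha]; gcongr; exact hEa j
  calc μ (⋂ j ∈ S, (E j)ᶜ) = ∏ j ∈ S, μ (E j)ᶜ :=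
        ((iIndepSet_iff_iIndep _ _).1 hE).meas_biInter hcompl
    _ ≤ ∏ _j ∈ S, ENNReal.ofReal (exp (-a)) := prod_le_prod' fun j _ => hle j
    _ = ENNReal.ofReal (exp (-(#S * a))) := by
        rw [prod_const, ← ENNReal.ofReal_pow (exp_pos _).le, ← exp_nat_mul]
        ring_nf

end Independence

section Bernoulli

variable {Ω : Type*} [MeasurableSpace Ω] {μ : Measure Ω} [IsProbabilityMeasure μ]
  {X : ℕ → Ω → ℕ} {p : ℝ}

lemma measure_setOf_eq_zero_eq_ofReal_one_sub (hp : 0 ≤ p) (hmeas : ∀ i, Measurable (X i))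
    (hval : ∀ i ω, X i ω ≤ 1) (hdist : ∀ i, μ {ω | X i ω = 1} = ENNReal.ofReal p) (i : ℕ) :
    μ {ω | X i ω = 0} = ENNReal.ofReal (1 - p) := by
  have hcompl : {ω | X i ω = 0} = {ω | X i ω = 1}ᶜ := by
    ext ω; have := hval i ω; simp only [Set.mem_ofPred_eq, Set.mem_compl_iff]; omega
  rw [hcompl, prob_compl_eq_one_sub (s := {ω | X i ω = 1}) (hmeas i (measurableSet_singleton 1)),
    hdist i, ENNReal.ofReal_sub _ hp, ENNReal.ofReal_one]

lemma measure_alternatingOn_Ico (hp0 : 0 ≤ p) (hp1 : p ≤ 1) (hmeas : ∀ i, Measurable (X i))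
    (hval : ∀ i ω, X i ω ≤ 1) (hdist : ∀ i, μ {ω | X i ω = 1} = ENNReal.ofReal p)
    (hindep : iIndepFun X μ) (ξ a j : ℕ) :
    μ (alternatingOn X ξ (Ico a (a + 2 * j))) = ENNReal.ofReal ((p * (1 - p)) ^ j) := by
  set F := fun i => μ {ω | X i ω = (ξ + i) % 2}
  have hpair : ∀ i, F i * F (i + 1) = ENNReal.ofReal (p * (1 - p)) := fun i => by
    have h0 := measure_setOf_eq_zero_eq_ofReal_one_sub hp0 hmeas hval hdist
    rcases Nat.mod_two_eq_zero_or_one (ξ + i) with h | h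
    · have h' : (ξ + (i + 1)) % 2 = 1 := by omega
      simp only [F, h, h', h0, hdist, mul_comm p, ENNReal.ofReal_mul (sub_nonneg.2 hp1)]
    · have h' : (ξ + (i + 1)) % 2 = 0 := by omega
      simp only [F, h, h', h0, hdist, ENNReal.ofReal_mul hp0]
  rw [alternatingOn, measure_setOf_forall_eq_prod hindep]
  induction j with
  | zero => simp
  | succ j ih =>
    rw [show a + 2 * (j + 1) = a + 2 * j + 1 + 1 by ring, prod_Ico_succ_top (by omega),
      prod_Ico_succ_top (by omega), mul_assoc, ih, hpair, pow_succ,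
      ENNReal.ofReal_mul (pow_nonneg (mul_nonneg hp0 (sub_nonneg.2 hp1)) _)]

end Bernoulli

section Asymptotics

lemma rpow_mul_logb_one_div {r : ℝ} (hr0 : 0 < r) (hr1 : r ≠ 1) {x : ℝ} (hx : 0 < x) (c : ℝ) :
    r ^ (c * logb (1 / r) x) = x ^ (-c) := by
  have hb0 : 0 < 1 / r := one_div_pos.2 hr0
  conv_rhs => rw [← rpow_logb hb0 (by simpa using hr1) hx]
  rw [← rpow_mul hb0.le, one_div, inv_rpow hr0.le, ← rpow_neg hr0.le]
  ring_nf

-- Even, so that an alternating window of this length `k` has probability exactly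
-- `(p (1 - p)) ^ (k / 2)`.
noncomputable def evenLength (r c : ℝ) (N : ℕ) : ℕ := 2 * (⌈c * logb (1 / r) N / 2⌉₊ + 1)

variable {r c : ℝ} {N : ℕ}

lemma two_le_evenLength : 2 ≤ evenLength r c N := by
  unfold evenLength; omega

lemma logb_natCast_nonneg {b : ℝ} (hb : 1 < b) (N : ℕ) : 0 ≤ logb b N :=
  div_nonneg (log_natCast_nonneg N) (log_nonneg hb.le)

lemma mul_logb_le_evenLength_sub_two : c * logb (1 / r) N ≤ (evenLength r c N - 2 : ℕ) := by
  have h := Nat.le_ceil (c * logb (1 / r) N / 2)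
  rw [evenLength, show 2 * (⌈c * logb (1 / r) N / 2⌉₊ + 1) - 2 = 2 * ⌈c * logb (1 / r) N / 2⌉₊
    by omega]
  push_cast
  linarith

lemma evenLength_lt (hr0 : 0 < r) (hr1 : r < 1) (hc : 0 ≤ c) :
    (evenLength r c N : ℝ) < c * logb (1 / r) N + 4 := by
  have h := Nat.ceil_lt_add_one (div_nonneg (mul_nonneg hc
    (logb_natCast_nonneg ((one_lt_div hr0).2 hr1) N)) zero_le_two)
  rw [evenLength]
  push_cast
  linarith

lemma pow_evenLength_le (hr0 : 0 < r) (hr1 : r < 1) (hN : 1 ≤ N) :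
    r ^ evenLength r c N ≤ (N : ℝ) ^ (-c) := by
  rw [← rpow_mul_logb_one_div hr0 hr1.ne (by exact_mod_cast hN), ← rpow_natCast]
  refine rpow_le_rpow_of_exponent_ge hr0 hr1.le ?_
  calc c * logb (1 / r) N ≤ (evenLength r c N - 2 : ℕ) := mul_logb_le_evenLength_sub_two
    _ ≤ evenLength r c N := by exact_mod_cast Nat.sub_le _ _

lemma le_pow_evenLength (hr0 : 0 < r) (hr1 : r < 1) (hc : 0 ≤ c) (hN : 1 ≤ N) :
    r ^ 4 * (N : ℝ) ^ (-c) ≤ r ^ evenLength r c N := by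
  rw [← rpow_mul_logb_one_div hr0 hr1.ne (by exact_mod_cast hN),
    ← rpow_natCast r (evenLength r c N), ← rpow_natCast r 4, ← rpow_add hr0]
  refine rpow_le_rpow_of_exponent_ge hr0 hr1.le ?_
  push_cast
  linarith [evenLength_lt hr0 hr1 hc (N := N)]

lemma two_mul_le_div_mul {N k : ℕ} {c t : ℝ} (hk : 0 < k) (hkN : 2 * k ≤ N) (ht : 0 ≤ t)
    (h : 4 * k * c ≤ N * t) : 2 * c ≤ (N / k : ℕ) * t := by
  have hN : N ≤ 2 * (N / k * k) := by
    have h1 : 1 ≤ N / k := (Nat.le_div_iff_mul_le hk).2 (by omega)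
    have h2 : k ≤ N / k * k := Nat.le_mul_of_pos_left k h1
    have := Nat.div_add_mod' N k
    have := Nat.mod_lt N hk
    omega
  have hNR : (N : ℝ) ≤ 2 * ((N / k : ℕ) * k) := by exact_mod_cast hN
  have hkR : (0 : ℝ) < k := by exact_mod_cast hk
  refine le_of_mul_le_mul_left ?_ hkR
  nlinarith [mul_le_mul_of_nonneg_right hNR ht]

variable {ε : ℝ}

lemma eventually_two_mul_log_le (hr0 : 0 < r) (hr1 : r < 1) (hε0 : 0 < ε) (hε1 : ε ≤ 1) :
    ∀ᶠ N : ℕ in atTop,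
      2 * log N ≤ (N / evenLength r (1 - ε) N : ℕ) * r ^ evenLength r (1 - ε) N := by
  -- Since `k ≤ C log N` and `r ^ k ≥ r ^ 4 N ^ (ε - 1)`, this reduces to `(log N) ^ 2 = o(N ^ ε)`.
  have hlogr : 0 < log (1 / r) := log_pos ((one_lt_div hr0).2 hr1)
  set C := 1 / log (1 / r) + 4
  have hC0 : 0 < C := by positivity
  have hcast := tendsto_natCast_atTop_atTop (R := ℝ)
  have hlog1 : ∀ᶠ N : ℕ in atTop, 1 ≤ log N :=
    (tendsto_log_atTop.comp hcast).eventually_ge_atTop 1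
  have hsq : ∀ᶠ N : ℕ in atTop, 4 * C * log N ^ 2 ≤ r ^ 4 * (N : ℝ) ^ ε := by
    have h := (isLittleO_log_rpow_rpow_atTop 2 hε0).bound (c := r ^ 4 / (4 * C)) (by positivity)
    filter_upwards [hcast.eventually h] with N hN
    rw [norm_of_nonneg (rpow_nonneg (log_natCast_nonneg N) _),
      norm_of_nonneg (rpow_nonneg (Nat.cast_nonneg N) _), rpow_two] at hN
    calc 4 * C * log N ^ 2 ≤ 4 * C * (r ^ 4 / (4 * C) * (N : ℝ) ^ ε) := by gcongr
      _ = r ^ 4 * (N : ℝ) ^ ε := by field_simp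
  filter_upwards [hlog1, hsq, eventually_ge_atTop 1] with N hlog1 hsq hN
  set k := evenLength r (1 - ε) N
  have hNR : (1 : ℝ) ≤ N := by exact_mod_cast hN
  have hkC : (k : ℝ) ≤ C * log N := by
    have hL : logb (1 / r) N = 1 / log (1 / r) * log N := by rw [logb]; ring
    have := evenLength_lt hr0 hr1 (sub_nonneg.2 hε1) (N := N)
    have := logb_natCast_nonneg ((one_lt_div hr0).2 hr1) N
    nlinarith
  have hNε : (N : ℝ) ^ ε ≤ N := by
    simpa using rpow_le_rpow_of_exponent_le hNR hε1
  have hr4 : r ^ 4 ≤ 1 := pow_le_one₀ hr0.le hr1.le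
  have hlogsq : 4 * k * log N ≤ 4 * C * log N ^ 2 := by nlinarith
  have hkN : 2 * (k : ℝ) ≤ N := by
    have : r ^ 4 * (N : ℝ) ^ ε ≤ (N : ℝ) ^ ε := mul_le_of_le_one_left (by positivity) hr4
    nlinarith
  apply two_mul_le_div_mul (two_pos.trans_le two_le_evenLength) (by exact_mod_cast hkN)
    (by positivity)
  calc 4 * k * log N ≤ 4 * C * log N ^ 2 := hlogsq
    _ ≤ r ^ 4 * (N : ℝ) ^ ε := hsq
    _ = N * (r ^ 4 * (N : ℝ) ^ (-(1 - ε))) := by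
        rw [neg_sub, rpow_sub_one (by positivity)]; field_simp
    _ ≤ N * r ^ k := by gcongr; exact le_pow_evenLength hr0 hr1 (sub_nonneg.2 hε1) hN

end Asymptotics

lemma ae_eventually_notMem_of_summable {α : Type*} [MeasurableSpace α] {μ : Measure α}
    {s : ℕ → Set α} {f : ℕ → ℝ} (hf : Summable f)
    (hs : ∀ᶠ n in atTop, μ (s n) ≤ ENNReal.ofReal (f n)) :
    ∀ᵐ x ∂μ, ∀ᶠ n in atTop, x ∉ s n := by
  obtain ⟨n₀, hn₀⟩ := eventually_atTop.1 hs
  have hsum : ∑' n, μ (s (n + n₀)) ≠ ⊤ :=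
    ne_top_of_le_ne_top ((summable_nat_add_iff n₀).2 hf).tsum_ofReal_ne_top
      (ENNReal.tsum_le_tsum fun n => hn₀ _ (Nat.le_add_left _ _))
  filter_upwards [ae_eventually_notMem hsum] with x hx
  rw [← map_add_atTop_eq_nat n₀]
  exact hx

lemma one_le_liminf_div {f g : ℕ → ℝ} {a b : ℝ} (hg : ∀ᶠ N in atTop, 1 ≤ g N)
    (hup : ∀ᶠ N in atTop, f N ≤ a * g N + b)
    (hlow : ∀ n : ℕ, ∀ᶠ N in atTop, (1 - 1 / (n + 1 : ℝ)) * g N ≤ f N) :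
    1 ≤ liminf (fun N => f N / g N) atTop := by
  have hbdd : IsCoboundedUnder (· ≥ ·) atTop fun N => f N / g N := by
    refine isCoboundedUnder_ge_of_eventually_le atTop (x := a + |b|) ?_
    filter_upwards [hg, hup] with N hgN hfN
    rw [div_le_iff₀ (by linarith)]
    nlinarith [le_abs_self b, abs_nonneg b]
  have hle : ∀ n : ℕ, 1 - 1 / (n + 1 : ℝ) ≤ liminf (fun N => f N / g N) atTop := fun n =>
    le_liminf_of_le hbdd (by
      filter_upwards [hg, hlow n] with N hgN hfN
      rwa [le_div_iff₀ (by linarith)])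
  have hlim : Tendsto (fun n : ℕ => 1 - 1 / (n + 1 : ℝ)) atTop (𝓝 1) := by
    simpa using tendsto_one_div_add_atTop_nhds_zero_nat.const_sub (1 : ℝ)
  exact le_of_tendsto' hlim hle

def block (k b : ℕ) : Finset ℕ := Ico (1 + b * k) (1 + b * k + k)

open Function in
lemma pairwise_disjoint_block (k : ℕ) : Pairwise (Disjoint on block k) := by
  intro b b' hbb'
  rw [onFun, disjoint_left]
  intro i hi hi'
  rw [block, mem_Ico] at hi hi'
  rcases Nat.lt_or_gt_of_ne hbb' with h | h
  · have := Nat.mul_le_mul_right k (Nat.succ_le_of_lt h); rw [Nat.succ_mul] at this; omega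
  · have := Nat.mul_le_mul_right k (Nat.succ_le_of_lt h); rw [Nat.succ_mul] at this; omega

section LongestSwitch

variable {Ω : Type*} [MeasurableSpace Ω] {μ : Measure Ω} [IsProbabilityMeasure μ]
  {X : ℕ → Ω → ℕ} {p : ℝ}

lemma sqrt_mul_one_sub_mem_Ioo (hp0 : 0 < p) (hp1 : p < 1) :
    0 < √(p * (1 - p)) ∧ √(p * (1 - p)) < 1 := by
  refine ⟨sqrt_pos.2 (mul_pos hp0 (sub_pos.2 hp1)), (sqrt_lt' one_pos).2 ?_⟩
  nlinarith

section

variable (hp0 : 0 < p) (hp1 : p < 1) (hmeas : ∀ i, Measurable (X i)) (hval : ∀ i ω, X i ω ≤ 1)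
  (hdist : ∀ i, μ {ω | X i ω = 1} = ENNReal.ofReal p) (hindep : iIndepFun X μ)
include hp0 hp1 hmeas hval hdist hindep

lemma measure_alternatingOn_evenLength (c : ℝ) (N ξ a : ℕ) :
    μ (alternatingOn X ξ (Ico a (a + evenLength √(p * (1 - p)) c N)))
      = ENNReal.ofReal (√(p * (1 - p)) ^ evenLength √(p * (1 - p)) c N) := by
  rw [evenLength, measure_alternatingOn_Ico hp0.le hp1.le hmeas hval hdist hindep, pow_mul,
    sq_sqrt (mul_nonneg hp0.le (sub_pos.2 hp1).le)]

lemma measure_biUnion_alternatingOn_le (c : ℝ) (N : ℕ) :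
    μ (⋃ a ∈ Icc 1 N, ⋃ ξ ∈ range 2,
        alternatingOn X ξ (Ico a (a + evenLength √(p * (1 - p)) c N)))
      ≤ ENNReal.ofReal (N * (2 * √(p * (1 - p)) ^ evenLength √(p * (1 - p)) c N)) := by
  calc _ ≤ ∑ a ∈ Icc 1 N, ∑ ξ ∈ range 2,
        μ (alternatingOn X ξ (Ico a (a + evenLength √(p * (1 - p)) c N))) :=
        (measure_biUnion_finset_le _ _).trans
          (sum_le_sum fun a _ => measure_biUnion_finset_le _ _)
    _ = _ := by
        simp only [measure_alternatingOn_evenLength hp0 hp1 hmeas hval hdist hindep, sum_const,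
          card_range, Nat.card_Icc, Nat.add_sub_cancel, nsmul_eq_mul]
        rw [ENNReal.ofReal_mul (by positivity), ENNReal.ofReal_mul (by norm_num),
          ENNReal.ofReal_natCast, ENNReal.ofReal_ofNat]
        push_cast; ring

lemma measure_iInter_compl_alternatingOn_block_le (c : ℝ) (N M : ℕ) :
    μ (⋂ b ∈ range M, (alternatingOn X 0 (block (evenLength √(p * (1 - p)) c N) b))ᶜ)
      ≤ ENNReal.ofReal (exp (-(M * √(p * (1 - p)) ^ evenLength √(p * (1 - p)) c N))) := by
  have h := measure_biInter_compl_le_exp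
    (E := fun b => alternatingOn X 0 (block (evenLength √(p * (1 - p)) c N) b))
    (iIndepSet_setOf_forall_eq hmeas hindep (pairwise_disjoint_block _) _)
    (fun b => measurableSet_setOf_forall_eq hmeas _ _) (by positivity)
    (fun b => (measure_alternatingOn_evenLength hp0 hp1 hmeas hval hdist hindep _ _ _ _).ge)
    (range M)
  rwa [card_range] at h

lemma ae_eventually_longestSwitch_le :
    ∀ᵐ ω ∂μ, ∀ᶠ N : ℕ in atTop,
      (longestSwitch X N 1 ω : ℝ) ≤ 3 * logb (1 / √(p * (1 - p))) N + 2 := by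
  obtain ⟨hr0, hr1⟩ := sqrt_mul_one_sub_mem_Ioo hp0 hp1
  set r := √(p * (1 - p))
  have hE : ∀ᶠ N : ℕ in atTop, μ (⋃ a ∈ Icc 1 N, ⋃ ξ ∈ range 2,
      alternatingOn X ξ (Ico a (a + evenLength r 3 N))) ≤ ENNReal.ofReal (2 * (1 / N ^ 2)) := by
    filter_upwards [eventually_ge_atTop 1] with N hN
    have hN0 : (0 : ℝ) < N := by exact_mod_cast hN
    have hpow : r ^ evenLength r 3 N ≤ 1 / N ^ 3 := by
      have := pow_evenLength_le hr0 hr1 (c := 3) hN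
      rwa [rpow_neg hN0.le, show (3 : ℝ) = ((3 : ℕ) : ℝ) by norm_num, rpow_natCast,
        ← one_div] at this
    refine (measure_biUnion_alternatingOn_le hp0 hp1 hmeas hval hdist hindep 3 N).trans
      (ENNReal.ofReal_le_ofReal ?_)
    calc (N : ℝ) * (2 * r ^ evenLength r 3 N) ≤ N * (2 * (1 / N ^ 3)) := by gcongr
      _ = 2 * (1 / N ^ 2) := by field_simp
  filter_upwards [ae_eventually_notMem_of_summable
    ((summable_one_div_nat_pow.2 one_lt_two).mul_left 2) hE] with ω hω
  filter_upwards [hω] with N hN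
  have hle : longestSwitch X N 1 ω ≤ evenLength r 3 N - 2 := by
    by_contra! h
    obtain ⟨a, ha, ξ, hξ, hmem⟩ := exists_mem_alternatingOn_of_lt_longestSwitch hval h
    rw [Nat.sub_add_cancel two_le_evenLength] at hmem
    exact hN (Set.mem_biUnion ha (Set.mem_biUnion hξ hmem))
  have hlt := evenLength_lt hr0 hr1 (c := 3) (N := N) (by norm_num)
  calc (longestSwitch X N 1 ω : ℝ) ≤ (evenLength r 3 N - 2 : ℕ) := by exact_mod_cast hle
    _ ≤ 3 * logb (1 / r) N + 2 := by
        rw [Nat.cast_sub two_le_evenLength]; push_cast; linarith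

lemma ae_eventually_mul_logb_le_longestSwitch {ε : ℝ} (hε0 : 0 < ε) (hε1 : ε ≤ 1) :
    ∀ᵐ ω ∂μ, ∀ᶠ N : ℕ in atTop,
      (1 - ε) * logb (1 / √(p * (1 - p))) N ≤ longestSwitch X N 1 ω := by
  obtain ⟨hr0, hr1⟩ := sqrt_mul_one_sub_mem_Ioo hp0 hp1
  set r := √(p * (1 - p))
  set k := fun N => evenLength r (1 - ε) N
  have hF : ∀ᶠ N : ℕ in atTop,
      μ (⋂ b ∈ range (N / k N), (alternatingOn X 0 (block (k N) b))ᶜ)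
        ≤ ENNReal.ofReal (1 / N ^ 2) := by
    filter_upwards [eventually_two_mul_log_le hr0 hr1 hε0 hε1, eventually_ge_atTop 1]
      with N hN hN1
    have hN0 : (0 : ℝ) < N := by exact_mod_cast hN1
    calc _ ≤ ENNReal.ofReal (exp (-((N / k N : ℕ) * r ^ k N))) :=
          measure_iInter_compl_alternatingOn_block_le hp0 hp1 hmeas hval hdist hindep _ N _
      _ ≤ ENNReal.ofReal (exp (-(2 * log N))) := by gcongr
      _ = ENNReal.ofReal (1 / N ^ 2) := by
          rw [show -(2 * log N) = log N * (-2) by ring, exp_mul, exp_log hN0, rpow_neg hN0.le,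
            rpow_two, one_div]
  filter_upwards [ae_eventually_notMem_of_summable (summable_one_div_nat_pow.2 one_lt_two) hF]
    with ω hω
  filter_upwards [hω] with N hN
  obtain ⟨b, hb, hωb⟩ : ∃ b ∈ range (N / k N), ω ∈ alternatingOn X 0 (block (k N) b) := by
    by_contra! h
    exact hN (Set.mem_iInter₂.2 h)
  have hbk : (b + 1) * k N ≤ N :=
    (Nat.le_div_iff_mul_le (two_pos.trans_le two_le_evenLength)).1 (mem_range.1 hb)
  rw [Nat.succ_mul] at hbk
  have hk2 : 2 ≤ k N := two_le_evenLength
  calc (1 - ε) * logb (1 / r) N ≤ (k N - 2 : ℕ) := mul_logb_le_evenLength_sub_two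
    _ ≤ (k N - 1 : ℕ) := by gcongr; omega
    _ ≤ longestSwitch X N 1 ω := by
        exact_mod_cast le_longestSwitch_of_mem_alternatingOn hval hωb (by omega) (by omega)
          (by omega)

end

end LongestSwitch

theorem one_le_liminf_longestSwitch_div_logb
    {Ω : Type*} [MeasurableSpace Ω] (μ : Measure Ω) [IsProbabilityMeasure μ]
    (p q : ℝ) (hp0 : 0 < p) (hp1 : p < 1) (hq : q = 1 - p)
    (X : ℕ → Ω → ℕ)
    (hmeas : ∀ i, Measurable (X i))
    (hval : ∀ i ω, X i ω ≤ 1)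
    (hdist : ∀ i, μ {ω | X i ω = 1} = ENNReal.ofReal p)
    (hindep : iIndepFun X μ) :
    ∀ᵐ ω ∂μ, 1 ≤ atTop.liminf
      (fun N : ℕ => (longestSwitch X N 1 ω : ℝ) / Real.logb (1 / Real.sqrt (p * q)) (N : ℝ)) := by
  subst hq
  obtain ⟨hr0, hr1⟩ := sqrt_mul_one_sub_mem_Ioo hp0 hp1
  have hlogb : ∀ᶠ N : ℕ in atTop, 1 ≤ logb (1 / √(p * (1 - p))) N :=
    ((tendsto_logb_atTop ((one_lt_div hr0).2 hr1)).comp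
      tendsto_natCast_atTop_atTop).eventually_ge_atTop 1
  have hlower : ∀ᵐ ω ∂μ, ∀ n : ℕ, ∀ᶠ N : ℕ in atTop,
      (1 - 1 / (n + 1 : ℝ)) * logb (1 / √(p * (1 - p))) N ≤ longestSwitch X N 1 ω :=
    ae_all_iff.2 fun n => ae_eventually_mul_logb_le_longestSwitch hp0 hp1 hmeas hval hdist hindep
      (by positivity) (div_le_one_of_le₀ (by simp) (by positivity))
  filter_upwards [ae_eventually_longestSwitch_le hp0 hp1 hmeas hval hdist hindep, hlower]
    with ω hup hlow
  exact one_le_liminf_div hlogb hup hlow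
end

section
/- Let N, K ∈ ℕ with N ≥ 2K. Then P(M_N < K−1) ≤ ( 1 − (K+2)(pq)^{K/2} + 2(pq)^{K} )^{(⌊N/K⌋ − 1)/2}. -/
open MeasureTheory ProbabilityTheory Filter
open scoped Classical

/-!
Cut the trials `X_1, …, X_{2KJ}`, `J = ⌊⌊N/K⌋/2⌋`, into `J` consecutive blocks of length
`2K`. If `M_N < K - 1`, then in no block does a window of `K` alternating trials start at one of
the first `K + 1` positions of the block. These `J` events concern disjoint sets of trials, so
they are independent, and it suffices to bound the probability of each by
`1 - (K + 2)(pq)^{K/2} + 2(pq)^K`, which lies in `[0, 1]`; then use `J ≥ (⌊N/K⌋ - 1)/2`.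

Inside a block starting at `l`, consider the `K` *hooks* starting at `l + i`, `i < K` (an
alternating window of length `K` followed by a repetition of its last value), and the alternating
window starting at `l + K`. A hook cannot overlap an alternating window that starts strictly inside
it, so these events are pairwise disjoint except for the first hook and the last window, and
Bonferroni's inequality bounds the probability of having no alternating window by
`1 - (K P(hook) + P(window)) + P(hook followed by a window)`. Evaluating these pattern
probabilities gives exactly the claimed bound for even `K`, and a smaller one for odd `K`.
-/

section BlockIndependence

open Function

variable {Ω ι β : Type*} [MeasurableSpace Ω] [MeasurableSpace β] {μ : Measure Ω}
  {X : ι → Ω → β}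

lemma ProbabilityTheory.iIndepFun.measure_inter_eq_mul_of_disjoint (hX : iIndepFun X μ)
    (hmeas : ∀ i, Measurable (X i)) {S T : Set ι} (hST : Disjoint S T) {E F : Set Ω}
    (hE : MeasurableSet[⨆ i ∈ S, MeasurableSpace.comap (X i) inferInstance] E)
    (hF : MeasurableSet[⨆ i ∈ T, MeasurableSpace.comap (X i) inferInstance] F) :
    μ (E ∩ F) = μ E * μ F :=
  (Indep_iff _ _ μ).1
    (indep_iSup_of_disjoint (fun i ↦ (hmeas i).comap_le) hX.iIndep hST) E F hE hF

lemma ProbabilityTheory.iIndepFun.measure_biInter_range_eq_prod (hX : iIndepFun X μ)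
    (hmeas : ∀ i, Measurable (X i)) {B : ℕ → Set ι} (hB : Pairwise (Disjoint on B))
    {E : ℕ → Set Ω}
    (hE : ∀ j, MeasurableSet[⨆ i ∈ B j, MeasurableSpace.comap (X i) inferInstance] (E j))
    (J : ℕ) : μ (⋂ j ∈ Finset.range J, E j) = ∏ j ∈ Finset.range J, μ (E j) := by
  induction J with
  | zero => have := hX.isProbabilityMeasure; simp
  | succ J ih =>
    have hdisj : Disjoint (⋃ j ∈ Finset.range J, B j) (B J) :=
      Set.disjoint_iUnion₂_left.2 fun j hj ↦ hB (Finset.mem_range.1 hj).ne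
    have hmeasI : MeasurableSet[⨆ i ∈ ⋃ j ∈ Finset.range J, B j,
        MeasurableSpace.comap (X i) inferInstance] (⋂ j ∈ Finset.range J, E j) :=
      Finset.measurableSet_biInter _ fun j hj ↦ by
        have hle : (⨆ i ∈ B j, MeasurableSpace.comap (X i) inferInstance) ≤
            ⨆ i ∈ ⋃ j ∈ Finset.range J, B j, MeasurableSpace.comap (X i) inferInstance :=
          biSup_mono fun _ hi ↦ Set.mem_biUnion hj hi
        exact hle _ (hE j)
    rw [Finset.range_add_one, Finset.set_biInter_insert, Set.inter_comm,
      hX.measure_inter_eq_mul_of_disjoint hmeas hdisj hmeasI (hE J), ih,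
      Finset.prod_insert Finset.notMem_range_self, mul_comm]

lemma pairwise_disjoint_Ico_add_mul (a L : ℕ) :
    Pairwise (Disjoint on fun j ↦ Set.Ico (a + j * L) (a + j * L + L)) := by
  intro j k hjk
  wlog h : j < k generalizing j k
  · exact (this hjk.symm (by omega)).symm
  have : (j + 1) * L ≤ k * L := Nat.mul_le_mul_right L h
  exact Set.Ico_disjoint_Ico.2 (by rw [add_mul, one_mul] at this; omega)

end BlockIndependence

section Patterns

variable {Ω β : Type*}

def patternSet (X : ℕ → Ω → β) (s L : ℕ) (v : ℕ → β) : Set Ω :=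
  {ω | ∀ t < L, X (s + t) ω = v t}

lemma patternSet_eq_biInter (X : ℕ → Ω → β) (s L : ℕ) (v : ℕ → β) :
    patternSet X s L v = ⋂ t ∈ Finset.range L, X (s + t) ⁻¹' {v t} := by
  ext ω
  simp [patternSet]

lemma measurableSet_patternSet_iSup [MeasurableSpace Ω] [MeasurableSpace β]
    [MeasurableSingletonClass β] (X : ℕ → Ω → β) {s L : ℕ}
    {T : Set ℕ} (hT : Set.Ico s (s + L) ⊆ T) (v : ℕ → β) :
    MeasurableSet[⨆ i ∈ T, MeasurableSpace.comap (X i) inferInstance] (patternSet X s L v) := by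
  rw [patternSet_eq_biInter]
  refine Finset.measurableSet_biInter _ fun t ht ↦ ?_
  have hmem : s + t ∈ T := hT ⟨by omega, by rw [Finset.mem_range] at ht; omega⟩
  have hle : MeasurableSpace.comap (X (s + t)) inferInstance ≤
      ⨆ i ∈ T, MeasurableSpace.comap (X i) inferInstance :=
    le_iSup₂_of_le (s + t) hmem le_rfl
  exact hle _ ⟨{v t}, measurableSet_singleton _, rfl⟩

lemma measurableSet_patternSet [MeasurableSpace Ω] [MeasurableSpace β]
    [MeasurableSingletonClass β] {X : ℕ → Ω → β}
    (hmeas : ∀ i, Measurable (X i)) (s L : ℕ) (v : ℕ → β) :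
    MeasurableSet (patternSet X s L v) :=
  iSup₂_le (fun i _ ↦ (hmeas i).comap_le) _
    (measurableSet_patternSet_iSup X (T := Set.univ) (Set.subset_univ _) v)

lemma disjoint_patternSet {X : ℕ → Ω → β} {s L : ℕ} {v w : ℕ → β} (hL : 0 < L)
    (hvw : v 0 ≠ w 0) : Disjoint (patternSet X s L v) (patternSet X s L w) :=
  Set.disjoint_left.2 fun _ hv hw ↦ hvw ((hv 0 hL).symm.trans (hw 0 hL))

lemma measureReal_patternSet_inter_patternSet [MeasurableSpace Ω] [MeasurableSpace β]
    [MeasurableSingletonClass β] {μ : Measure Ω} {X : ℕ → Ω → β}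
    (hX : iIndepFun X μ) (hmeas : ∀ i, Measurable (X i)) (s L L' : ℕ) (v w : ℕ → β) :
    μ.real (patternSet X s L v ∩ patternSet X (s + L) L' w) =
      μ.real (patternSet X s L v) * μ.real (patternSet X (s + L) L' w) := by
  have hdisj : Disjoint (Set.Ico s (s + L)) (Set.Ico (s + L) (s + L + L')) :=
    Set.Ico_disjoint_Ico_same
  simp only [measureReal_def, hX.measure_inter_eq_mul_of_disjoint hmeas hdisj
    (measurableSet_patternSet_iSup X subset_rfl v) (measurableSet_patternSet_iSup X subset_rfl w),
    ENNReal.toReal_mul]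

end Patterns

section Bernoulli

variable {Ω : Type*} [MeasurableSpace Ω]

structure IsBernoulliSeq (μ : Measure Ω) (X : ℕ → Ω → ℕ) (p : ℝ) : Prop where
  measurable : ∀ i, Measurable (X i)
  le_one : ∀ i ω, X i ω ≤ 1
  measure_eq_one : ∀ i, μ {ω | X i ω = 1} = ENNReal.ofReal p
  indep : iIndepFun X μ

def bernProb (p : ℝ) (a : ℕ) : ℝ := if a = 1 then p else 1 - p

variable {μ : Measure Ω} [IsProbabilityMeasure μ] {X : ℕ → Ω → ℕ} {p : ℝ}

lemma IsBernoulliSeq.measureReal_preimage_singleton (hX : IsBernoulliSeq μ X p) (hp : 0 ≤ p)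
    (i : ℕ) {a : ℕ} (ha : a ≤ 1) : μ.real (X i ⁻¹' {a}) = bernProb p a := by
  have h1 : μ.real (X i ⁻¹' {1}) = p :=
    (congrArg ENNReal.toReal (hX.measure_eq_one i)).trans (ENNReal.toReal_ofReal hp)
  rcases Nat.le_one_iff_eq_zero_or_eq_one.1 ha with rfl | rfl
  · have h0 : X i ⁻¹' {0} = (X i ⁻¹' {1})ᶜ := by
      ext ω
      have := hX.le_one i ω
      simp only [Set.mem_preimage, Set.mem_singleton_iff, Set.mem_compl_iff]
      omega
    rw [h0, probReal_compl_eq_one_sub (hX.measurable i (measurableSet_singleton 1)), h1]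
    simp [bernProb]
  · simp [bernProb, h1]

lemma IsBernoulliSeq.measureReal_patternSet (hX : IsBernoulliSeq μ X p) (hp : 0 ≤ p)
    (s L : ℕ) {v : ℕ → ℕ} (hv : ∀ t, v t ≤ 1) :
    μ.real (patternSet X s L v) = ∏ t ∈ Finset.range L, bernProb p (v t) := by
  have hindep : iIndepFun (fun t ↦ X (s + t)) μ := hX.indep.precomp (add_right_injective s)
  rw [patternSet_eq_biInter, measureReal_def,
    hindep.meas_biInter fun t _ ↦ ⟨{v t}, measurableSet_singleton _, rfl⟩,
    ENNReal.toReal_prod]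
  exact Finset.prod_congr rfl fun t _ ↦ hX.measureReal_preimage_singleton hp _ (hv t)

end Bernoulli

section AlternatingWindows

variable {Ω : Type*} {X : ℕ → Ω → ℕ} {ω : Ω}

def altBit (ε t : ℕ) : ℕ := (ε + t) % 2

def hookBit (K ε t : ℕ) : ℕ := altBit ε (min t (K - 1))

def altSet (X : ℕ → Ω → ℕ) (s K : ℕ) : Set Ω :=
  patternSet X s K (altBit 0) ∪ patternSet X s K (altBit 1)

def hookSet (X : ℕ → Ω → ℕ) (s K : ℕ) : Set Ω :=
  patternSet X s (K + 1) (hookBit K 0) ∪ patternSet X s (K + 1) (hookBit K 1)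

def altRunIn (X : ℕ → Ω → ℕ) (K l : ℕ) : Set Ω :=
  ⋃ i ∈ Finset.range (K + 1), altSet X (l + i) K

lemma altBit_le_one (ε t : ℕ) : altBit ε t ≤ 1 := by
  unfold altBit; omega

lemma hookBit_le_one (K ε t : ℕ) : hookBit K ε t ≤ 1 := altBit_le_one _ _

lemma ne_of_mem_altSet {s K : ℕ} (h : ω ∈ altSet X s K) {t : ℕ} (ht : t + 1 < K) :
    X (s + (t + 1)) ω ≠ X (s + t) ω := by
  rcases h with h | h <;>
  · rw [h t (by omega), h (t + 1) ht]
    unfold altBit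
    omega

lemma hookSet_subset_altSet (X : ℕ → Ω → ℕ) (s K : ℕ) :
    hookSet X s K ⊆ altSet X s K := by
  have key : ∀ ε, patternSet X s (K + 1) (hookBit K ε) ⊆ patternSet X s K (altBit ε) :=
    fun ε ω h t ht ↦ by rw [h t (by omega), hookBit, min_eq_left (by omega)]
  exact Set.union_subset_union (key 0) (key 1)

lemma eq_of_mem_hookSet {s K : ℕ} (h : ω ∈ hookSet X s K) :
    X (s + K) ω = X (s + (K - 1)) ω := by
  rcases h with h | h <;>
  · rw [h K (by omega), h (K - 1) (by omega), hookBit, hookBit, min_eq_right (by omega),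
      min_eq_left le_rfl]

lemma disjoint_hookSet_altSet {s s' K : ℕ} (hss' : s < s') (hs' : s' < s + K) :
    Disjoint (hookSet X s K) (altSet X s' K) := by
  refine Set.disjoint_left.2 fun ω hhook halt ↦ ?_
  have hne := ne_of_mem_altSet halt (t := s + K - 1 - s') (by omega)
  rw [show s' + (s + K - 1 - s' + 1) = s + K by omega,
    show s' + (s + K - 1 - s') = s + (K - 1) by omega] at hne
  exact hne (eq_of_mem_hookSet hhook)

lemma hookSet_inter_altSet_subset (X : ℕ → Ω → ℕ) (l K : ℕ) :
    hookSet X l K ∩ altSet X (l + K) K ⊆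
      (patternSet X l K (altBit 0) ∩ patternSet X (l + K) K (altBit (0 + (K - 1)))) ∪
        (patternSet X l K (altBit 1) ∩ patternSet X (l + K) K (altBit (1 + (K - 1)))) := by
  have key : ∀ {ω ε δ}, ω ∈ patternSet X l (K + 1) (hookBit K ε) →
      ω ∈ patternSet X (l + K) K (altBit δ) →
      ω ∈ patternSet X l K (altBit ε) ∩ patternSet X (l + K) K (altBit (ε + (K - 1))) := by
    intro ω ε δ hhook halt
    refine ⟨fun t ht ↦ ?_, fun t ht ↦ ?_⟩
    · rw [hhook t (by omega), hookBit, min_eq_left (by omega)]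
    · have hjoin : altBit δ 0 = altBit ε (K - 1) := by
        rw [← halt 0 (by omega), add_zero, hhook K (by omega), hookBit, min_eq_right (by omega)]
      rw [halt t ht]
      unfold altBit at hjoin ⊢
      omega
  rintro ω ⟨hhook | hhook, halt | halt⟩
  exacts [Or.inl (key hhook halt), Or.inl (key hhook halt), Or.inr (key hhook halt),
    Or.inr (key hhook halt)]

end AlternatingWindows

section Bonferroni

variable {Ω : Type*} [MeasurableSpace Ω] {μ : Measure Ω} [IsProbabilityMeasure μ]
  {X : ℕ → Ω → ℕ}

lemma measurableSet_altSet (hmeas : ∀ i, Measurable (X i)) (s K : ℕ) :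
    MeasurableSet (altSet X s K) :=
  (measurableSet_patternSet hmeas _ _ _).union (measurableSet_patternSet hmeas _ _ _)

lemma measurableSet_hookSet (hmeas : ∀ i, Measurable (X i)) (s K : ℕ) :
    MeasurableSet (hookSet X s K) :=
  (measurableSet_patternSet hmeas _ _ _).union (measurableSet_patternSet hmeas _ _ _)

lemma measurableSet_altRunIn_iSup (X : ℕ → Ω → ℕ) (K l : ℕ) :
    MeasurableSet[⨆ i ∈ Set.Ico l (l + 2 * K), MeasurableSpace.comap (X i) inferInstance]
      (altRunIn X K l) := by
  refine Finset.measurableSet_biUnion _ fun i hi ↦ ?_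
  have hsub : Set.Ico (l + i) (l + i + K) ⊆ Set.Ico l (l + 2 * K) := by
    rw [Finset.mem_range] at hi
    exact Set.Ico_subset_Ico (by omega) (by omega)
  exact (measurableSet_patternSet_iSup X hsub _).union (measurableSet_patternSet_iSup X hsub _)

lemma measurableSet_altRunIn (hmeas : ∀ i, Measurable (X i)) (K l : ℕ) :
    MeasurableSet (altRunIn X K l) := by
  have hle : (⨆ i ∈ Set.Ico l (l + 2 * K), MeasurableSpace.comap (X i) inferInstance)
      ≤ ‹MeasurableSpace Ω› :=
    iSup₂_le fun i _ ↦ (hmeas i).comap_le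
  exact hle _ (measurableSet_altRunIn_iSup X K l)

lemma measureReal_compl_altRunIn_le (hmeas : ∀ i, Measurable (X i)) (K l : ℕ) :
    μ.real (altRunIn X K l)ᶜ ≤
      1 - (∑ i ∈ Finset.range K, μ.real (hookSet X (l + i) K) + μ.real (altSet X (l + K) K))
        + μ.real (hookSet X l K ∩ altSet X (l + K) K) := by
  set U := ⋃ i ∈ Finset.range K, hookSet X (l + i) K
  set A := altSet X (l + K) K
  have hrun : U ∪ A ⊆ altRunIn X K l := by
    refine Set.union_subset (Set.iUnion₂_subset fun i hi ↦ ?_) ?_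
    · rw [Finset.mem_range] at hi
      exact (hookSet_subset_altSet X _ K).trans
        (Set.subset_biUnion_of_mem (u := fun i ↦ altSet X (l + i) K)
          (Finset.mem_coe.2 (Finset.mem_range.2 (by omega))))
    · exact Set.subset_biUnion_of_mem (u := fun i ↦ altSet X (l + i) K)
        (Finset.mem_coe.2 (Finset.mem_range.2 (by omega)))
  have hU : μ.real U = ∑ i ∈ Finset.range K, μ.real (hookSet X (l + i) K) := by
    refine measureReal_biUnion_finset (fun i hi j hj hij ↦ ?_)
      fun i _ ↦ measurableSet_hookSet hmeas _ _
    rw [Finset.mem_coe, Finset.mem_range] at hi hj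
    rcases lt_or_gt_of_ne hij with h | h
    · exact (disjoint_hookSet_altSet (by omega) (by omega)).mono_right
        (hookSet_subset_altSet X _ K)
    · exact ((disjoint_hookSet_altSet (by omega) (by omega)).mono_right
        (hookSet_subset_altSet X _ K)).symm
  have hinter : U ∩ A ⊆ hookSet X l K ∩ A := by
    rintro ω ⟨hωU, hωA⟩
    obtain ⟨i, hi, hωi⟩ := Set.mem_iUnion₂.1 hωU
    rw [Finset.mem_range] at hi
    obtain rfl | hi0 := Nat.eq_zero_or_pos i
    · exact ⟨by simpa using hωi, hωA⟩
    · exact (Set.disjoint_left.1 (disjoint_hookSet_altSet (by omega) (by omega)) hωi hωA).elim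
  have hsplit := measureReal_union_add_inter (μ := μ) (s := U)
    (measurableSet_altSet hmeas (l + K) K) (measure_ne_top μ _) (measure_ne_top μ _)
  rw [probReal_compl_eq_one_sub (measurableSet_altRunIn hmeas K l), ← hU]
  linarith [measureReal_mono (μ := μ) hrun, measureReal_mono (μ := μ) hinter]

end Bonferroni

section Probabilities

def altProb (p : ℝ) (K ε : ℕ) : ℝ := ∏ t ∈ Finset.range K, bernProb p (altBit ε t)

def hookProb (p : ℝ) (K : ℕ) : ℝ :=
  altProb p K 0 * bernProb p (altBit 0 (K - 1)) + altProb p K 1 * bernProb p (altBit 1 (K - 1))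

def altWindowProb (p : ℝ) (K : ℕ) : ℝ := altProb p K 0 + altProb p K 1

def twoWindowProb (p : ℝ) (K : ℕ) : ℝ :=
  altProb p K 0 * altProb p K (0 + (K - 1)) + altProb p K 1 * altProb p K (1 + (K - 1))

lemma bernProb_altBit_mul_bernProb_altBit_add_one (p : ℝ) (ε t : ℕ) :
    bernProb p (altBit ε t) * bernProb p (altBit ε (t + 1)) = p * (1 - p) := by
  unfold bernProb altBit
  rcases Nat.mod_two_eq_zero_or_one (ε + t) with h | h
  · rw [h, show (ε + (t + 1)) % 2 = 1 by omega]
    simp [mul_comm]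
  · rw [h, show (ε + (t + 1)) % 2 = 0 by omega]
    simp

lemma altProb_two_mul (p : ℝ) (b ε : ℕ) : altProb p (2 * b) ε = (p * (1 - p)) ^ b := by
  induction b with
  | zero => simp [altProb]
  | succ b ih =>
    rw [altProb, show 2 * (b + 1) = 2 * b + 1 + 1 by ring, Finset.prod_range_succ,
      Finset.prod_range_succ, ← altProb, ih, mul_assoc,
      bernProb_altBit_mul_bernProb_altBit_add_one, pow_succ]

lemma altProb_two_mul_add_one (p : ℝ) (b ε : ℕ) :
    altProb p (2 * b + 1) ε = (p * (1 - p)) ^ b * bernProb p (ε % 2) := by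
  rw [altProb, Finset.prod_range_succ, ← altProb, altProb_two_mul, altBit,
    Nat.add_mul_mod_self_left]

lemma bernProb_altBit_zero_add_bernProb_altBit_one (p : ℝ) (t : ℕ) :
    bernProb p (altBit 0 t) + bernProb p (altBit 1 t) = 1 := by
  unfold bernProb altBit
  rcases Nat.mod_two_eq_zero_or_one t with h | h
  · rw [zero_add, h, show (1 + t) % 2 = 1 by omega]
    simp
  · rw [zero_add, h, show (1 + t) % 2 = 0 by omega]
    simp

lemma prod_bernProb_hookBit (p : ℝ) (K ε : ℕ) :
    ∏ t ∈ Finset.range (K + 1), bernProb p (hookBit K ε t) =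
      altProb p K ε * bernProb p (altBit ε (K - 1)) := by
  rw [Finset.prod_range_succ, hookBit, min_eq_right (Nat.sub_le K 1), altProb]
  congr 1
  refine Finset.prod_congr rfl fun t ht ↦ ?_
  rw [Finset.mem_range] at ht
  rw [hookBit, min_eq_left (by omega)]

variable {Ω : Type*} [MeasurableSpace Ω] {μ : Measure Ω} [IsProbabilityMeasure μ]
  {X : ℕ → Ω → ℕ} {p : ℝ}

lemma IsBernoulliSeq.measureReal_altPattern (hX : IsBernoulliSeq μ X p) (hp : 0 ≤ p)
    (s K ε : ℕ) : μ.real (patternSet X s K (altBit ε)) = altProb p K ε :=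
  hX.measureReal_patternSet hp s K (altBit_le_one ε)

lemma IsBernoulliSeq.measureReal_altSet (hX : IsBernoulliSeq μ X p) (hp : 0 ≤ p) (s : ℕ)
    {K : ℕ} (hK : 1 ≤ K) : μ.real (altSet X s K) = altWindowProb p K := by
  rw [altSet, measureReal_union (disjoint_patternSet hK (by decide))
    (measurableSet_patternSet hX.measurable _ _ _), hX.measureReal_altPattern hp,
    hX.measureReal_altPattern hp, altWindowProb]

lemma IsBernoulliSeq.measureReal_hookSet (hX : IsBernoulliSeq μ X p) (hp : 0 ≤ p) (s K : ℕ) :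
    μ.real (hookSet X s K) = hookProb p K := by
  rw [hookSet, measureReal_union (disjoint_patternSet K.succ_pos (by simp [hookBit, altBit]))
    (measurableSet_patternSet hX.measurable _ _ _),
    hX.measureReal_patternSet hp _ _ (hookBit_le_one K 0),
    hX.measureReal_patternSet hp _ _ (hookBit_le_one K 1), prod_bernProb_hookBit,
    prod_bernProb_hookBit, hookProb]

lemma IsBernoulliSeq.measureReal_hookSet_inter_altSet_le (hX : IsBernoulliSeq μ X p)
    (hp : 0 ≤ p) (l K : ℕ) :
    μ.real (hookSet X l K ∩ altSet X (l + K) K) ≤ twoWindowProb p K := by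
  refine (measureReal_mono (hookSet_inter_altSet_subset X l K)).trans
    ((measureReal_union_le _ _).trans_eq ?_)
  simp only [measureReal_patternSet_inter_patternSet hX.indep hX.measurable,
    hX.measureReal_altPattern hp, twoWindowProb]

end Probabilities

section Algebra

variable {p : ℝ}

noncomputable def switchBound (p : ℝ) (K : ℕ) : ℝ :=
  1 - ((K : ℝ) + 2) * (p * (1 - p)) ^ ((K : ℝ) / 2) + 2 * (p * (1 - p)) ^ (K : ℝ)

lemma switchBound_eq_sqrt (hp0 : 0 ≤ p) (hp1 : p ≤ 1) (K : ℕ) :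
    switchBound p K =
      1 - ((K : ℝ) + 2) * √(p * (1 - p)) ^ K + 2 * (√(p * (1 - p)) ^ K) ^ 2 := by
  have hpq : 0 ≤ p * (1 - p) := mul_nonneg hp0 (by linarith)
  rw [switchBound, Real.rpow_div_two_eq_sqrt _ hpq, Real.rpow_natCast, Real.rpow_natCast,
    ← pow_mul, mul_comm K 2, pow_mul, Real.sq_sqrt hpq]

lemma sqrt_mul_one_sub_le_half (p : ℝ) : √(p * (1 - p)) ≤ 1 / 2 :=
  Real.sqrt_le_iff.2 ⟨by norm_num, by nlinarith [sq_nonneg (2 * p - 1)]⟩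

lemma switchBound_le_one (hp0 : 0 ≤ p) (hp1 : p ≤ 1) (K : ℕ) : switchBound p K ≤ 1 := by
  have hx0 : 0 ≤ √(p * (1 - p)) ^ K := by positivity
  have hx1 : √(p * (1 - p)) ^ K ≤ 1 :=
    pow_le_one₀ (Real.sqrt_nonneg _) ((sqrt_mul_one_sub_le_half p).trans (by norm_num))
  rw [switchBound_eq_sqrt hp0 hp1]
  nlinarith

lemma one_sub_add_eq_switchBound_of_even (hp0 : 0 ≤ p) (hp1 : p ≤ 1) (b : ℕ) :
    1 - (((2 * b : ℕ) : ℝ) * hookProb p (2 * b) + altWindowProb p (2 * b))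
        + twoWindowProb p (2 * b) = switchBound p (2 * b) := by
  have hhook : hookProb p (2 * b) = (p * (1 - p)) ^ b := by
    rw [hookProb, altProb_two_mul, altProb_two_mul, ← mul_add,
      bernProb_altBit_zero_add_bernProb_altBit_one, mul_one]
  have halt : altWindowProb p (2 * b) = 2 * (p * (1 - p)) ^ b := by
    rw [altWindowProb, altProb_two_mul, altProb_two_mul]; ring
  have htwo : twoWindowProb p (2 * b) = 2 * ((p * (1 - p)) ^ b) ^ 2 := by
    simp only [twoWindowProb, altProb_two_mul]; ring
  rw [hhook, halt, htwo, switchBound_eq_sqrt hp0 hp1, pow_mul,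
    Real.sq_sqrt (mul_nonneg hp0 (by linarith))]
  push_cast
  ring

lemma one_sub_add_le_switchBound_of_odd (hp0 : 0 ≤ p) (hp1 : p ≤ 1) (b : ℕ) :
    1 - (((2 * b + 1 : ℕ) : ℝ) * hookProb p (2 * b + 1) + altWindowProb p (2 * b + 1))
        + twoWindowProb p (2 * b + 1) ≤ switchBound p (2 * b + 1) := by
  set r := √(p * (1 - p))
  have hr2 : r ^ 2 = p * (1 - p) := Real.sq_sqrt (mul_nonneg hp0 (by linarith))
  obtain ⟨R, hR⟩ : ∃ R, (p * (1 - p)) ^ b = R := ⟨_, rfl⟩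
  have hS : p * p + (1 - p) * (1 - p) = 1 - 2 * r ^ 2 := by rw [hr2]; ring
  have hhook : hookProb p (2 * b + 1) = R * (1 - 2 * r ^ 2) := by
    simp only [hookProb, altProb_two_mul_add_one, altBit, bernProb, Nat.add_sub_cancel,
      Nat.add_mul_mod_self_left, hR, ← hS]
    norm_num
    ring
  have halt : altWindowProb p (2 * b + 1) = R := by
    simp only [altWindowProb, altProb_two_mul_add_one, bernProb, hR]
    norm_num
    ring
  have htwo : twoWindowProb p (2 * b + 1) = R ^ 2 * (1 - 2 * r ^ 2) := by
    simp only [twoWindowProb, altProb_two_mul_add_one, bernProb, Nat.add_sub_cancel,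
      Nat.add_mul_mod_self_left, hR, ← hS]
    norm_num
    ring
  have hpq : 0 ≤ p * (1 - p) := by rw [← hr2]; positivity
  have hR0 : 0 ≤ R := hR ▸ pow_nonneg hpq b
  have hR1 : R ≤ 1 := hR ▸ pow_le_one₀ hpq (by nlinarith [sq_nonneg (2 * p - 1)])
  have hr : r ^ (2 * b + 1) = R * r := by rw [pow_succ, pow_mul, hr2, hR]
  have hr0 : 0 ≤ r := Real.sqrt_nonneg _
  have hr1 : r ≤ 1 / 2 := sqrt_mul_one_sub_le_half p
  -- the difference of the two sides is `R (1 - 2r) ((2b + 1)(1 + r) + 1 - R (1 + 2r))`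
  have hfac : 0 ≤ R * ((1 - 2 * r) * ((2 * b + 1) * (1 + r) + 1 - R * (1 + 2 * r))) :=
    mul_nonneg hR0 (mul_nonneg (by linarith) (by nlinarith))
  rw [hhook, halt, htwo, switchBound_eq_sqrt hp0 hp1, hr]
  push_cast
  nlinarith [hfac]

lemma one_sub_add_le_switchBound (hp0 : 0 ≤ p) (hp1 : p ≤ 1) (K : ℕ) :
    1 - (K * hookProb p K + altWindowProb p K) + twoWindowProb p K ≤ switchBound p K := by
  obtain ⟨b, rfl | rfl⟩ := Nat.even_or_odd' K
  · exact (one_sub_add_eq_switchBound_of_even hp0 hp1 b).le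
  · exact one_sub_add_le_switchBound_of_odd hp0 hp1 b

end Algebra

section LongestSwitch

variable {Ω : Type*} {X : ℕ → Ω → ℕ} {ω : Ω}

lemma switchCount_eq_of_mem_patternSet_altBit {s K ε : ℕ}
    (h : ω ∈ patternSet X s K (altBit ε)) : switchCount X K s ω = K - 1 := by
  have hone : ∀ i ∈ Finset.Icc (s + 1) (K + s - 1),
      (1 - X (i - 1) ω) * X i ω + X (i - 1) ω * (1 - X i ω) = 1 := by
    intro i hi
    rw [Finset.mem_Icc] at hi
    rw [show i - 1 = s + (i - 1 - s) by omega, h _ (by omega), show i = s + (i - s) by omega,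
      h _ (by omega), show s + (i - s) - 1 - s = i - s - 1 by omega]
    unfold altBit
    rcases Nat.mod_two_eq_zero_or_one (ε + (i - s - 1)) with h0 | h0 <;>
    · rw [h0, show (ε + (i - s)) % 2 = 1 - (ε + (i - s - 1)) % 2 by omega, h0]
  rw [switchCount, Finset.sum_congr rfl hone, Finset.sum_const, Nat.card_Icc, smul_eq_mul,
    mul_one]
  omega

lemma switchCount_eq_of_mem_altSet {s K : ℕ} (h : ω ∈ altSet X s K) :
    switchCount X K s ω = K - 1 := by
  rcases h with h | h <;> exact switchCount_eq_of_mem_patternSet_altBit h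

lemma le_longestSwitch {N m n i : ℕ} (hn : n ∈ Finset.Icc 1 N)
    (hi : i ∈ Finset.Icc m (m + N - n + 1)) (h : switchCount X n i ω = n - 1) :
    n - 1 ≤ longestSwitch X N m ω := by
  unfold longestSwitch
  exact Finset.le_sup (f := fun n ↦ n - 1)
    (by simp only [Finset.mem_filter]; exact ⟨hn, i, hi, h⟩)

lemma le_longestSwitch_of_mem_altRunIn {N K l : ℕ} (hK : 1 ≤ K) (hl : 1 ≤ l)
    (hlN : l + 2 * K ≤ N + 1) (h : ω ∈ altRunIn X K l) : K - 1 ≤ longestSwitch X N 1 ω := by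
  obtain ⟨i, hi, hω⟩ := Set.mem_iUnion₂.1 h
  rw [Finset.mem_range] at hi
  exact le_longestSwitch (Finset.mem_Icc.2 ⟨hK, by omega⟩)
    (Finset.mem_Icc.2 ⟨by omega, by omega⟩) (switchCount_eq_of_mem_altSet hω)

lemma setOf_longestSwitch_lt_subset {N K : ℕ} (hK : 1 ≤ K) :
    {ω | longestSwitch X N 1 ω < K - 1} ⊆
      ⋂ j ∈ Finset.range (N / K / 2), (altRunIn X K (1 + j * (2 * K)))ᶜ := by
  intro ω hω
  simp only [Set.mem_iInter, Set.mem_compl_iff, Finset.mem_range]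
  intro j hj h
  refine Nat.not_le.2 hω (le_longestSwitch_of_mem_altRunIn hK (by omega) ?_ h)
  have h1 : j * (2 * K) + 2 * K ≤ N / K / 2 * (2 * K) := by
    rw [← add_one_mul]; exact Nat.mul_le_mul_right _ hj
  have h2 : N / K / 2 * (2 * K) ≤ N / K * K := by
    rw [← mul_assoc]; exact Nat.mul_le_mul_right _ (Nat.div_mul_le_self _ _)
  have h3 : N / K * K ≤ N := Nat.div_mul_le_self N K
  omega

end LongestSwitch

section Blocks

variable {Ω : Type*} [MeasurableSpace Ω] {μ : Measure Ω} [IsProbabilityMeasure μ]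
  {X : ℕ → Ω → ℕ} {p : ℝ}

lemma IsBernoulliSeq.measureReal_compl_altRunIn_le_switchBound (hX : IsBernoulliSeq μ X p)
    (hp0 : 0 ≤ p) (hp1 : p ≤ 1) {K : ℕ} (hK : 1 ≤ K) (l : ℕ) :
    μ.real (altRunIn X K l)ᶜ ≤ switchBound p K := by
  have h := measureReal_compl_altRunIn_le (μ := μ) hX.measurable K l
  rw [Finset.sum_congr rfl fun i _ ↦ hX.measureReal_hookSet hp0 (l + i) K, Finset.sum_const,
    Finset.card_range, nsmul_eq_mul, hX.measureReal_altSet hp0 _ hK] at h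
  linarith [hX.measureReal_hookSet_inter_altSet_le hp0 l K,
    one_sub_add_le_switchBound hp0 hp1 K]

lemma IsBernoulliSeq.measureReal_biInter_compl_altRunIn_le (hX : IsBernoulliSeq μ X p)
    (hp0 : 0 ≤ p) (hp1 : p ≤ 1) {K : ℕ} (hK : 1 ≤ K) (J : ℕ) :
    μ.real (⋂ j ∈ Finset.range J, (altRunIn X K (1 + j * (2 * K)))ᶜ) ≤
      switchBound p K ^ J := by
  rw [measureReal_def, hX.indep.measure_biInter_range_eq_prod hX.measurable
    (pairwise_disjoint_Ico_add_mul 1 (2 * K)) (fun j ↦ (measurableSet_altRunIn_iSup X K _).compl),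
    ENNReal.toReal_prod]
  calc ∏ j ∈ Finset.range J, μ.real (altRunIn X K (1 + j * (2 * K)))ᶜ
      ≤ ∏ _j ∈ Finset.range J, switchBound p K :=
        Finset.prod_le_prod (fun _ _ ↦ measureReal_nonneg) fun _ _ ↦
          hX.measureReal_compl_altRunIn_le_switchBound hp0 hp1 hK _
    _ = switchBound p K ^ J := by rw [Finset.prod_const, Finset.card_range]

end Blocks

theorem prob_longestSwitch_lt_le
    {Ω : Type*} [MeasurableSpace Ω] (μ : Measure Ω) [IsProbabilityMeasure μ]
    (p q : ℝ) (hp0 : 0 < p) (hp1 : p < 1) (hq : q = 1 - p)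
    (X : ℕ → Ω → ℕ)
    (hmeas : ∀ i, Measurable (X i))
    (hval : ∀ i ω, X i ω ≤ 1)
    (hdist : ∀ i, μ {ω | X i ω = 1} = ENNReal.ofReal p)
    (hindep : iIndepFun X μ)
    (N K : ℕ) (hK : 1 ≤ K) (hNK : 2 * K ≤ N) :
    (μ {ω | (longestSwitch X N 1 ω : ℝ) < (K : ℝ) - 1}).toReal
      ≤ (1 - ((K : ℝ) + 2) * (p * q) ^ ((K : ℝ) / 2) + 2 * (p * q) ^ (K : ℝ))
          ^ ((((N / K : ℕ) : ℝ) - 1) / 2) := by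
  subst hq
  have hX : IsBernoulliSeq μ X p := ⟨hmeas, hval, hdist, hindep⟩
  have hsub : {ω | (longestSwitch X N 1 ω : ℝ) < (K : ℝ) - 1} ⊆
      ⋂ j ∈ Finset.range (N / K / 2), (altRunIn X K (1 + j * (2 * K)))ᶜ := by
    refine fun ω hω ↦ setOf_longestSwitch_lt_subset hK (?_ : longestSwitch X N 1 ω < K - 1)
    have h : (longestSwitch X N 1 ω : ℝ) < ((K - 1 : ℕ) : ℝ) := by
      rwa [Nat.cast_sub hK, Nat.cast_one]
    exact_mod_cast h
  have hB0 : 0 ≤ switchBound p K := measureReal_nonneg.trans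
    (hX.measureReal_compl_altRunIn_le_switchBound hp0.le hp1.le hK 0)
  have hm : (2 : ℝ) ≤ ((N / K : ℕ) : ℝ) := by
    exact_mod_cast (Nat.le_div_iff_mul_le (by omega)).2 (by omega)
  have hJ : ((N / K : ℕ) : ℝ) ≤ 2 * ((N / K / 2 : ℕ) : ℝ) + 1 := by
    exact_mod_cast (by omega)
  calc μ.real {ω | (longestSwitch X N 1 ω : ℝ) < (K : ℝ) - 1}
      ≤ μ.real (⋂ j ∈ Finset.range (N / K / 2), (altRunIn X K (1 + j * (2 * K)))ᶜ) :=
        measureReal_mono hsub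
    _ ≤ switchBound p K ^ (N / K / 2) :=
        hX.measureReal_biInter_compl_altRunIn_le hp0.le hp1.le hK _
    _ = switchBound p K ^ ((N / K / 2 : ℕ) : ℝ) := (Real.rpow_natCast _ _).symm
    _ ≤ switchBound p K ^ ((((N / K : ℕ) : ℝ) - 1) / 2) :=
        Real.rpow_le_rpow_of_exponent_ge' hB0 (switchBound_le_one hp0.le hp1.le K)
          (by linarith) (by linarith)
end

section
/- Let N, t ∈ ℕ with 2 ≤ t ≤ N. Then P(M_N < t−1) ≤ ( 1 − (pq)^{⌊t/2⌋} )^{⌊N/t⌋}; indeed, on the event {M_N < t−1} each of the ⌊N/t⌋ disjoint blocks of t consecutive trials X_{tk+1},…,X_{t(k+1)}, k = 0,…,⌊N/t⌋−1, fails to be fully alternating, and these block events are independent with failure probability at most 1 − (pq)^{⌊t/2⌋} each. -/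
/-
If `M_N < t - 1`, none of the `⌊N/t⌋` disjoint blocks of `t` consecutive trials alternates
completely, since a fully alternating block is itself a run of `t - 1` switches. A block alternates
exactly when it follows one of the two patterns `0101…` or `1010…`; these have probabilities
`p^⌈t/2⌉ q^⌊t/2⌋` and `q^⌈t/2⌉ p^⌊t/2⌋`, whose sum is at least `(pq)^⌊t/2⌋` because `p + q = 1`.
Events depending on disjoint blocks of independent trials are independent, so the probability
that no block alternates is a product of `⌊N/t⌋` factors, each at most `1 - (pq)^⌊t/2⌋`.
-/

open MeasureTheory ProbabilityTheory Filter
open scoped Classical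

open Finset Function

def alternatingSet (B : Finset ℕ) : Set (B → ℕ) := {g | ∃ b < 2, ∀ i, g i = (b + i) % 2}

theorem switchCount_of_alternating {Ω : Type*} {X : ℕ → Ω → ℕ} {ω : Ω} {b m n : ℕ}
    (h : ∀ i ∈ Ico m (m + n), X i ω = (b + i) % 2) : switchCount X n m ω = n - 1 := by
  have hswitch : ∀ i ∈ Icc (m + 1) (n + m - 1),
      (1 - X (i - 1) ω) * X i ω + X (i - 1) ω * (1 - X i ω) = 1 := by
    intro i hi
    rw [mem_Icc] at hi
    rw [h i (mem_Ico.2 ⟨by omega, by omega⟩), h (i - 1) (mem_Ico.2 ⟨by omega, by omega⟩)]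
    rcases Nat.mod_two_eq_zero_or_one (b + i) with hb | hb
    · rw [hb, show (b + (i - 1)) % 2 = 1 by omega]
    · rw [hb, show (b + (i - 1)) % 2 = 0 by omega]
  rw [switchCount, sum_congr rfl hswitch, sum_const, smul_eq_mul, mul_one, Nat.card_Icc]
  omega

theorem sub_one_le_longestSwitch_of_alternating {Ω : Type*} {X : ℕ → Ω → ℕ} {ω : Ω}
    {N m n i : ℕ} (hn : 1 ≤ n) (hi : m ≤ i) (hiN : i + n ≤ m + N)
    (h : (Ico i (i + n)).restrict (X · ω) ∈ alternatingSet _) :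
    n - 1 ≤ longestSwitch X N m ω := by
  obtain ⟨b, -, hb⟩ := h
  refine le_sup (f := fun n => n - 1) ?_
  simp only [mem_filter, mem_Icc]
  exact ⟨⟨hn, by omega⟩, i, ⟨hi, by omega⟩, switchCount_of_alternating fun j hj => hb ⟨j, hj⟩⟩

theorem restrict_Ico_notMem_alternatingSet_of_longestSwitch_lt {Ω : Type*} {X : ℕ → Ω → ℕ}
    {ω : Ω} {N m t k : ℕ} (ht : 1 ≤ t) (hk : k < N / t) (h : longestSwitch X N m ω < t - 1) :
    (Ico (t * k + m) (t * k + m + t)).restrict (X · ω) ∉ alternatingSet _ := by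
  have hkN : t * k + t ≤ N := by
    have := Nat.mul_le_mul_left t (Nat.succ_le_of_lt hk)
    rw [Nat.mul_succ] at this
    exact this.trans (Nat.mul_div_le N t)
  exact fun halt => not_le.2 h
    (sub_one_le_longestSwitch_of_alternating ht (by omega) (by omega) halt)

theorem pairwise_disjoint_Ico_mul_add (t c : ℕ) :
    Pairwise (Disjoint on fun k => Ico (t * k + c) (t * k + c + t)) := by
  intro k l hkl
  rw [Function.onFun, disjoint_left]
  intro i hik hil
  rw [mem_Ico] at hik hil
  rcases Nat.lt_or_gt_of_ne hkl with h | h <;>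
  · have := Nat.mul_le_mul_left t (Nat.succ_le_of_lt h)
    rw [Nat.mul_succ] at this
    omega

theorem prod_range_two_mul_mod_two {M : Type*} [CommMonoid M] (f : ℕ → M) (c m : ℕ) :
    ∏ j ∈ range (2 * m), f ((c + j) % 2) = (f 0 * f 1) ^ m := by
  induction m with
  | zero => simp
  | succ m ih =>
    have hpair : f ((c + 2 * m) % 2) * f ((c + (2 * m + 1)) % 2) = f 0 * f 1 := by
      rcases Nat.mod_two_eq_zero_or_one c with h | h
      · rw [show (c + 2 * m) % 2 = 0 by omega, show (c + (2 * m + 1)) % 2 = 1 by omega]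
      · rw [show (c + 2 * m) % 2 = 1 by omega, show (c + (2 * m + 1)) % 2 = 0 by omega, mul_comm]
    rw [show 2 * (m + 1) = 2 * m + 1 + 1 by ring, prod_range_succ, prod_range_succ, mul_assoc,
      hpair, ih, pow_succ]

theorem sum_prod_Ico_mod_two {R : Type*} [CommSemiring R] (f : ℕ → R) (s n : ℕ) :
    ∑ b ∈ range 2, ∏ i ∈ Ico s (s + n), f ((b + i) % 2)
      = (f 0 * f 1) ^ (n / 2) * if Even n then 2 else f 0 + f 1 := by
  simp only [prod_Ico_eq_prod_range, Nat.add_sub_cancel_left, ← add_assoc]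
  obtain ⟨m, rfl | rfl⟩ := Nat.even_or_odd' n
  · rw [if_pos (even_two_mul m), Nat.mul_div_cancel_left m two_pos]
    simp only [prod_range_two_mul_mod_two, sum_const, card_range, nsmul_eq_mul]
    push_cast; ring
  · have hlast (b : ℕ) : f ((b + s + 2 * m) % 2) = f ((b + s) % 2) := by congr 1; omega
    have hsum : ∑ b ∈ range 2, f ((b + s) % 2) = f 0 + f 1 := by
      rcases Nat.mod_two_eq_zero_or_one s with h | h
      · simp [sum_range_succ, h, Nat.add_mod]
      · simp [sum_range_succ, h, Nat.add_mod, add_comm]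
    simp only [prod_range_succ, prod_range_two_mul_mod_two, hlast, ← mul_sum, hsum]
    simp [show (2 * m + 1) / 2 = m by omega]

namespace ProbabilityTheory

theorem iIndepFun.iIndepFun_finsetRestrict {ι κ Ω : Type*} {β : ι → Type*}
    [∀ i, MeasurableSpace (β i)] [MeasurableSpace Ω] {μ : Measure Ω} {f : ∀ i, Ω → β i}
    (hf : iIndepFun f μ) (hmeas : ∀ i, Measurable (f i)) {B : κ → Finset ι}
    (hB : Pairwise (Disjoint on B)) :
    iIndepFun (fun k ω => (B k).restrict (f · ω)) μ := by
  rw [iIndepFun_iff_measure_inter_preimage_eq_mul]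
  intro S sets hsets
  induction S using Finset.induction_on with
  | empty => simp [hf.isProbabilityMeasure]
  | insert a S ha ih =>
    set U := S.biUnion B
    have hsub (k : S) : B k ⊆ U := subset_biUnion_of_mem B k.2
    have hind : IndepFun (fun ω => (B a).restrict (f · ω)) (fun ω => U.restrict (f · ω)) μ :=
      hf.indepFun_finset (B a) U ((disjoint_biUnion_right _ _ _).2 fun k hk =>
        hB (ne_of_mem_of_not_mem hk ha).symm) hmeas
    have hrest : ⋂ k ∈ S, (fun ω => (B k).restrict (f · ω)) ⁻¹' sets k
        = (fun ω => U.restrict (f · ω)) ⁻¹' ⋂ k : S, restrict₂ (hsub k) ⁻¹' sets k := by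
      ext ω
      simp only [Set.mem_iInter, Set.mem_preimage, Subtype.forall]
      rfl
    rw [set_biInter_insert, prod_insert ha, hrest,
      hind.measure_inter_preimage_eq_mul _ _ (hsets a (mem_insert_self a S))
        (MeasurableSet.iInter fun k : S =>
          measurable_restrict₂ _ (hsets k (mem_insert_of_mem k.2))),
      ← hrest, ih fun k hk => hsets k (mem_insert_of_mem hk)]

end ProbabilityTheory

section Bernoulli

variable {Ω : Type*} [MeasurableSpace Ω] {μ : Measure Ω} [IsProbabilityMeasure μ] {p : ℝ}
  {X : ℕ → Ω → ℕ}

theorem measureReal_eq_of_bernoulli (hmeas : ∀ i, Measurable (X i)) (hval : ∀ i ω, X i ω ≤ 1)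
    (hdist : ∀ i, μ {ω | X i ω = 1} = ENNReal.ofReal p) (hp : 0 ≤ p) (i : ℕ) {c : ℕ}
    (hc : c < 2) : μ.real {ω | X i ω = c} = if c = 1 then p else 1 - p := by
  have hone : μ.real (X i ⁻¹' {1}) = p := by
    rw [measureReal_def, ← ENNReal.toReal_ofReal hp, ← hdist i]
    rfl
  interval_cases c
  · have hzero : {ω | X i ω = 0} = (X i ⁻¹' {1})ᶜ := by
      ext ω
      have := hval i ω
      simp only [Set.mem_ofPred_eq, Set.mem_compl_iff, Set.mem_preimage, Set.mem_singleton_iff]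
      omega
    rw [hzero, probReal_compl_eq_one_sub (hmeas i (measurableSet_singleton 1)), hone,
      if_neg zero_ne_one]
  · rw [if_pos rfl]
    exact hone

theorem measureReal_alternating_of_bernoulli (hmeas : ∀ i, Measurable (X i))
    (hval : ∀ i ω, X i ω ≤ 1) (hdist : ∀ i, μ {ω | X i ω = 1} = ENNReal.ofReal p)
    (hindep : iIndepFun X μ) (hp : 0 ≤ p) (s : ℕ) {n : ℕ} (hn : 0 < n) :
    μ.real ((fun ω => (Ico s (s + n)).restrict (X · ω)) ⁻¹' alternatingSet _)
      = (p * (1 - p)) ^ (n / 2) * if Even n then 2 else 1 := by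
  set w : ℕ → ℝ := fun c => if c = 1 then p else 1 - p
  set E : ℕ → Set Ω := fun b => ⋂ i ∈ Ico s (s + n), X i ⁻¹' {(b + i) % 2}
  have hunion : (fun ω => (Ico s (s + n)).restrict (X · ω)) ⁻¹' alternatingSet _
      = ⋃ b ∈ range 2, E b := by
    ext ω; simp [alternatingSet, E]
  have hdisj : Set.PairwiseDisjoint ↑(range 2) E := by
    intro b hb b' hb' hbb'
    refine Set.disjoint_left.2 fun ω hω hω' => hbb' ?_
    have h := Set.mem_iInter₂.1 hω s (left_mem_Ico.2 (by omega))
    have h' := Set.mem_iInter₂.1 hω' s (left_mem_Ico.2 (by omega))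
    simp only [coe_range, Set.mem_Iio, Set.mem_preimage, Set.mem_singleton_iff] at hb hb' h h'
    omega
  have hE : ∀ b, μ.real (E b) = ∏ i ∈ Ico s (s + n), w ((b + i) % 2) := fun b => by
    rw [measureReal_def,
      hindep.measure_inter_preimage_eq_mul _ fun _ _ => measurableSet_singleton _,
      ENNReal.toReal_prod]
    exact prod_congr rfl fun i _ =>
      measureReal_eq_of_bernoulli hmeas hval hdist hp i (Nat.mod_lt _ two_pos)
  rw [hunion, measureReal_biUnion_finset hdisj fun b _ => ?_]
  · have hw0 : w 0 = 1 - p := if_neg zero_ne_one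
    have hw1 : w 1 = p := if_pos rfl
    rw [sum_congr rfl fun b _ => hE b, sum_prod_Ico_mod_two, hw0, hw1, sub_add_cancel,
      mul_comm (1 - p)]
  · exact measurableSet_biInter _ fun i _ => hmeas i (measurableSet_singleton _)

theorem measureReal_not_alternating_le_of_bernoulli (hmeas : ∀ i, Measurable (X i))
    (hval : ∀ i ω, X i ω ≤ 1) (hdist : ∀ i, μ {ω | X i ω = 1} = ENNReal.ofReal p)
    (hindep : iIndepFun X μ) (hp0 : 0 ≤ p) (hp1 : p ≤ 1) (s : ℕ) {n : ℕ} (hn : 0 < n) :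
    μ.real ((fun ω => (Ico s (s + n)).restrict (X · ω)) ⁻¹' (alternatingSet _)ᶜ)
      ≤ 1 - (p * (1 - p)) ^ (n / 2) := by
  have hpq : 0 ≤ (p * (1 - p)) ^ (n / 2) := pow_nonneg (mul_nonneg hp0 (by linarith)) _
  have hblock : Measurable fun ω => (Ico s (s + n)).restrict (X · ω) :=
    measurable_pi_lambda _ fun i => hmeas i
  rw [Set.preimage_compl, probReal_compl_eq_one_sub (hblock .of_discrete),
    measureReal_alternating_of_bernoulli hmeas hval hdist hindep hp0 s hn]
  split_ifs <;> linarith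

end Bernoulli

theorem prob_longestSwitch_lt_le_blocks_general
    {Ω : Type*} [MeasurableSpace Ω] (μ : Measure Ω) [IsProbabilityMeasure μ]
    (p q : ℝ) (hp0 : 0 < p) (hp1 : p < 1) (hq : q = 1 - p)
    (X : ℕ → Ω → ℕ)
    (hmeas : ∀ i, Measurable (X i))
    (hval : ∀ i ω, X i ω ≤ 1)
    (hdist : ∀ i, μ {ω | X i ω = 1} = ENNReal.ofReal p)
    (hindep : iIndepFun X μ)
    (N t : ℕ) (ht : 2 ≤ t) :
    (μ {ω | longestSwitch X N 1 ω < t - 1}).toReal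
      ≤ (1 - (p * q) ^ (t / 2)) ^ (N / t) := by
  subst hq
  set B : ℕ → Finset ℕ := fun k => Ico (t * k + 1) (t * k + 1 + t)
  set Y : ∀ k, Ω → B k → ℕ := fun k ω => (B k).restrict (X · ω)
  have hY : iIndepFun Y μ :=
    hindep.iIndepFun_finsetRestrict hmeas (pairwise_disjoint_Ico_mul_add t 1)
  calc (μ {ω | longestSwitch X N 1 ω < t - 1}).toReal
      ≤ μ.real (⋂ k ∈ range (N / t), Y k ⁻¹' (alternatingSet (B k))ᶜ) :=
        measureReal_mono fun ω hω => Set.mem_iInter₂.2 fun k hk =>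
          restrict_Ico_notMem_alternatingSet_of_longestSwitch_lt (by omega) (mem_range.1 hk) hω
    _ = ∏ k ∈ range (N / t), μ.real (Y k ⁻¹' (alternatingSet (B k))ᶜ) := by
      rw [measureReal_def, hY.measure_inter_preimage_eq_mul _ fun _ _ => .of_discrete,
        ENNReal.toReal_prod]
      rfl
    _ ≤ (1 - (p * (1 - p)) ^ (t / 2)) ^ (N / t) := by
      simpa using prod_le_prod (s := range (N / t)) (fun _ _ => measureReal_nonneg) fun k _ =>
        measureReal_not_alternating_le_of_bernoulli hmeas hval hdist hindep hp0.le hp1.le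
          (t * k + 1) (n := t) (by omega)

theorem prob_longestSwitch_lt_le_blocks
    {Ω : Type*} [MeasurableSpace Ω] (μ : Measure Ω) [IsProbabilityMeasure μ]
    (p q : ℝ) (hp0 : 0 < p) (hp1 : p < 1) (hq : q = 1 - p)
    (X : ℕ → Ω → ℕ)
    (hmeas : ∀ i, Measurable (X i))
    (hval : ∀ i ω, X i ω ≤ 1)
    (hdist : ∀ i, μ {ω | X i ω = 1} = ENNReal.ofReal p)
    (hindep : iIndepFun X μ)
    (N t : ℕ) (ht : 2 ≤ t) (htN : t ≤ N) :
    (μ {ω | longestSwitch X N 1 ω < t - 1}).toReal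
      ≤ (1 - (p * q) ^ (t / 2)) ^ (N / t) :=
  prob_longestSwitch_lt_le_blocks_general μ p q hp0 hp1 hq X hmeas hval hdist hindep N t ht
end

section
/- Fix T ∈ ℕ and ε > 0 with Tε > 1. For k ∈ ℕ let ũ(k) := ⌊(1+ε) log_{1/√(pq)} k^T⌋ + 1 and A_{k^T} := ∪_{i=1}^{k^T − ũ(k) + 1} { S_{ũ(k)}^{(i)} = ũ(k) − 1 }. Then ∑_{k=1}^∞ P(A_{k^T}) < ∞, and consequently P(A_{k^T} occurs for infinitely many k) = 0. -/
open MeasureTheory ProbabilityTheory Filter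
open scoped Classical

section Switches

variable {Ω : Type*} {X : ℕ → Ω → ℕ}

lemma switchCount_eq_sum_range (n i : ℕ) (ω : Ω) :
    switchCount X n i ω = ∑ j ∈ Finset.range (n - 1),
      ((1 - X (i + j) ω) * X (i + j + 1) ω + X (i + j) ω * (1 - X (i + j + 1) ω)) := by
  refine Finset.sum_nbij' (fun m ↦ m - (i + 1)) (fun j ↦ i + j + 1) ?_ ?_ ?_ ?_ ?_ <;>
    intro m hm <;> simp only [Finset.mem_Icc, Finset.mem_range] at hm ⊢
  any_goals omega
  rw [show i + (m - (i + 1)) = m - 1 by omega, Nat.sub_add_cancel (by omega)]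

lemma switch_le_one {a b : ℕ} (ha : a ≤ 1) (hb : b ≤ 1) : (1 - a) * b + a * (1 - b) ≤ 1 := by
  interval_cases a <;> interval_cases b <;> simp

lemma switch_eq_one_iff {a b : ℕ} (ha : a ≤ 1) (hb : b ≤ 1) :
    (1 - a) * b + a * (1 - b) = 1 ↔ a + b = 1 := by
  interval_cases a <;> interval_cases b <;> simp

lemma add_succ_eq_one_of_switchCount_eq (hval : ∀ i ω, X i ω ≤ 1) {n i : ℕ} {ω : Ω}
    (h : switchCount X n i ω = n - 1) {j : ℕ} (hj : j + 1 < n) :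
    X (i + j) ω + X (i + j + 1) ω = 1 := by
  rw [switchCount_eq_sum_range] at h
  have hsum_ones : ∑ _j ∈ Finset.range (n - 1), 1 = n - 1 := by simp
  have hall_one := (Finset.sum_eq_sum_iff_of_le
    fun j _ ↦ switch_le_one (hval (i + j) ω) (hval (i + j + 1) ω)).mp (h.trans hsum_ones.symm)
  exact (switch_eq_one_iff (hval _ ω) (hval _ ω)).mp (hall_one j (Finset.mem_range.mpr (by omega)))

lemma eq_mod_two_of_switchCount_eq (hval : ∀ i ω, X i ω ≤ 1) {n i : ℕ} {ω : Ω}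
    (h : switchCount X n i ω = n - 1) {j : ℕ} (hj : j < n) :
    X (i + j) ω = (X i ω + j) % 2 := by
  induction j with
  | zero => simpa using (Nat.mod_eq_of_lt (Nat.lt_succ_of_le (hval i ω))).symm
  | succ j ih =>
    have hsum := add_succ_eq_one_of_switchCount_eq hval h hj
    rw [← add_assoc]
    omega

def alternatingEvent (X : ℕ → Ω → ℕ) (b i n : ℕ) : Set Ω :=
  ⋂ j ∈ Finset.range n, X (i + j) ⁻¹' {(b + j) % 2}

lemma setOf_switchCount_eq_subset (hval : ∀ i ω, X i ω ≤ 1) (n i : ℕ) :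
    {ω | switchCount X n i ω = n - 1} ⊆ alternatingEvent X 0 i n ∪ alternatingEvent X 1 i n := by
  intro ω h
  have hω : ω ∈ alternatingEvent X (X i ω) i n := by
    simp only [alternatingEvent, Set.mem_iInter, Finset.mem_range]
    exact fun j hj ↦ eq_mod_two_of_switchCount_eq hval h hj
  rcases Nat.le_one_iff_eq_zero_or_eq_one.mp (hval i ω) with h0 | h1
  · exact .inl (h0 ▸ hω)
  · exact .inr (h1 ▸ hω)

end Switches

lemma prod_alternating_le_sqrt_mul_pow {a b : ℝ} (ha0 : 0 ≤ a) (ha1 : a ≤ 1) (hb0 : 0 ≤ b)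
    (hb1 : b ≤ 1) (c n : ℕ) :
    ∏ j ∈ Finset.range n, (if (c + j) % 2 = 1 then a else b) ≤ √(a * b) ^ (n - 1) := by
  have hab0 : 0 ≤ a * b := mul_nonneg ha0 hb0
  have hsqrt1 : √(a * b) ≤ 1 := Real.sqrt_le_one.mpr (mul_le_one₀ ha1 hb0 hb1)
  induction n using Nat.twoStepInduction with
  | zero => simp
  | one =>
    rw [Finset.prod_range_one, Nat.sub_self, pow_zero]
    split_ifs <;> assumption
  | more n ih _ =>
    have hpair : (if (c + n) % 2 = 1 then a else b) * (if (c + (n + 1)) % 2 = 1 then a else b)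
        = √(a * b) ^ 2 := by
      rw [Real.sq_sqrt hab0]
      rcases Nat.mod_two_eq_zero_or_one (c + n) with h | h
      · rw [if_neg (by omega), if_pos (by omega), mul_comm]
      · rw [if_pos h, if_neg (by omega)]
    calc ∏ j ∈ Finset.range (n + 2), (if (c + j) % 2 = 1 then a else b)
        = (∏ j ∈ Finset.range n, (if (c + j) % 2 = 1 then a else b)) * √(a * b) ^ 2 := by
          rw [Finset.prod_range_succ, Finset.prod_range_succ, mul_assoc, hpair]
      _ ≤ √(a * b) ^ (n - 1) * √(a * b) ^ 2 := by gcongr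
      _ = √(a * b) ^ (n - 1 + 2) := (pow_add _ _ _).symm
      _ ≤ √(a * b) ^ (n + 2 - 1) := pow_le_pow_of_le_one (Real.sqrt_nonneg _) hsqrt1 (by omega)

section Bernoulli

variable {Ω : Type*} [MeasurableSpace Ω] {μ : Measure Ω} {X : ℕ → Ω → ℕ} {p : ℝ}

lemma measure_preimage_singleton_of_le_one [IsProbabilityMeasure μ] {Y : Ω → ℕ}
    (hY : Measurable Y) (hval : ∀ ω, Y ω ≤ 1) (hdist : μ {ω | Y ω = 1} = ENNReal.ofReal p)
    (hp : 0 ≤ p) {c : ℕ} (hc : c ≤ 1) :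
    μ (Y ⁻¹' {c}) = ENNReal.ofReal (if c = 1 then p else 1 - p) := by
  rcases Nat.le_one_iff_eq_zero_or_eq_one.mp hc with rfl | rfl
  · have hcompl : Y ⁻¹' {0} = {ω | Y ω = 1}ᶜ := by
      ext ω
      have := hval ω
      simp only [Set.mem_preimage, Set.mem_singleton_iff, Set.mem_compl_iff, Set.mem_ofPred_eq]
      omega
    have hmeas : MeasurableSet {ω | Y ω = 1} := hY (measurableSet_singleton 1)
    rw [hcompl, prob_compl_eq_one_sub hmeas, hdist, if_neg zero_ne_one,
      ENNReal.ofReal_sub 1 hp, ENNReal.ofReal_one]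
  · exact hdist

lemma measure_alternatingEvent [IsProbabilityMeasure μ] (hindep : iIndepFun X μ)
    (hmeas : ∀ i, Measurable (X i)) (hval : ∀ i ω, X i ω ≤ 1)
    (hdist : ∀ i, μ {ω | X i ω = 1} = ENNReal.ofReal p) (hp0 : 0 ≤ p) (hp1 : p ≤ 1)
    (b i n : ℕ) :
    μ (alternatingEvent X b i n) =
      ENNReal.ofReal (∏ j ∈ Finset.range n, if (b + j) % 2 = 1 then p else 1 - p) := by
  rw [alternatingEvent, (hindep.precomp (add_right_injective i)).meas_biInter
      fun j _ ↦ ⟨_, measurableSet_singleton _, rfl⟩,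
    ENNReal.ofReal_prod_of_nonneg fun j _ ↦ by split_ifs <;> linarith]
  exact Finset.prod_congr rfl fun j _ ↦ measure_preimage_singleton_of_le_one (hmeas _)
    (hval _) (hdist _) hp0 (Nat.le_of_lt_succ (Nat.mod_lt _ two_pos))

lemma measure_switchCount_eq_le [IsProbabilityMeasure μ] (hindep : iIndepFun X μ)
    (hmeas : ∀ i, Measurable (X i)) (hval : ∀ i ω, X i ω ≤ 1)
    (hdist : ∀ i, μ {ω | X i ω = 1} = ENNReal.ofReal p) (hp0 : 0 ≤ p) (hp1 : p ≤ 1)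
    (n i : ℕ) :
    μ {ω | switchCount X n i ω = n - 1} ≤ ENNReal.ofReal (2 * √(p * (1 - p)) ^ (n - 1)) := by
  have halt (b : ℕ) :
      μ (alternatingEvent X b i n) ≤ ENNReal.ofReal (√(p * (1 - p)) ^ (n - 1)) := by
    rw [measure_alternatingEvent hindep hmeas hval hdist hp0 hp1]
    exact ENNReal.ofReal_le_ofReal
      (prod_alternating_le_sqrt_mul_pow hp0 hp1 (by linarith) (by linarith) b n)
  calc μ {ω | switchCount X n i ω = n - 1}
      ≤ μ (alternatingEvent X 0 i n) + μ (alternatingEvent X 1 i n) :=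
        (measure_mono (setOf_switchCount_eq_subset hval n i)).trans (measure_union_le _ _)
    _ ≤ ENNReal.ofReal (√(p * (1 - p)) ^ (n - 1)) + ENNReal.ofReal (√(p * (1 - p)) ^ (n - 1)) :=
        add_le_add (halt 0) (halt 1)
    _ = ENNReal.ofReal (2 * √(p * (1 - p)) ^ (n - 1)) := by
        rw [← ENNReal.ofReal_add (by positivity) (by positivity), two_mul]

lemma measure_exists_switchCount_eq_le [IsProbabilityMeasure μ] (hindep : iIndepFun X μ)
    (hmeas : ∀ i, Measurable (X i)) (hval : ∀ i ω, X i ω ≤ 1)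
    (hdist : ∀ i, μ {ω | X i ω = 1} = ENNReal.ofReal p) (hp0 : 0 ≤ p) (hp1 : p ≤ 1)
    (M n : ℕ) :
    μ {ω | ∃ i, 1 ≤ i ∧ i ≤ M ∧ switchCount X n i ω = n - 1} ≤
      ENNReal.ofReal (M * (2 * √(p * (1 - p)) ^ (n - 1))) := by
  have hunion : {ω | ∃ i, 1 ≤ i ∧ i ≤ M ∧ switchCount X n i ω = n - 1} =
      ⋃ i ∈ Finset.Icc 1 M, {ω | switchCount X n i ω = n - 1} := by
    ext ω; simp [and_assoc]
  calc μ {ω | ∃ i, 1 ≤ i ∧ i ≤ M ∧ switchCount X n i ω = n - 1}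
      ≤ ∑ i ∈ Finset.Icc 1 M, μ {ω | switchCount X n i ω = n - 1} :=
        hunion ▸ measure_biUnion_finset_le _ _
    _ ≤ ∑ _i ∈ Finset.Icc 1 M, ENNReal.ofReal (2 * √(p * (1 - p)) ^ (n - 1)) :=
        Finset.sum_le_sum fun i _ ↦ measure_switchCount_eq_le hindep hmeas hval hdist hp0 hp1 n i
    _ = ENNReal.ofReal (M * (2 * √(p * (1 - p)) ^ (n - 1))) := by
        rw [Finset.sum_const, Nat.card_Icc, Nat.add_sub_cancel, nsmul_eq_mul,
          ENNReal.ofReal_mul (Nat.cast_nonneg M), ENNReal.ofReal_natCast]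

end Bernoulli

lemma summable_toReal_and_measure_limsup_eq_zero {Ω : Type*} [MeasurableSpace Ω]
    {μ : Measure Ω} {s : ℕ → Set Ω} {f : ℕ → ℝ} (hf : Summable f) (hf0 : ∀ k, 0 ≤ f k)
    (hsf : ∀ k, μ (s k) ≤ ENNReal.ofReal (f k)) :
    (Summable fun k ↦ (μ (s k)).toReal) ∧ μ (limsup s atTop) = 0 := by
  have htsum : ∑' k, μ (s k) ≠ ⊤ :=
    ne_top_of_le_ne_top ((ENNReal.ofReal_tsum_of_nonneg hf0 hf).symm ▸ ENNReal.ofReal_ne_top)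
      (ENNReal.tsum_le_tsum hsf)
  exact ⟨ENNReal.summable_toReal htsum, measure_limsup_atTop_eq_zero htsum⟩

lemma pow_floor_mul_logb_inv_le {r x c : ℝ} (hr0 : 0 < r) (hr1 : r < 1) (hx : 0 < x) :
    r ^ ⌊c * Real.logb (1 / r) x⌋₊ ≤ r⁻¹ * x ^ (-c) := by
  have hry : r ^ (c * Real.logb (1 / r) x) = x ^ (-c) := by
    rw [one_div, Real.logb_inv_base, mul_neg, ← neg_mul, mul_comm, Real.rpow_mul hr0.le,
      Real.rpow_logb hr0 hr1.ne hx]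
  calc r ^ ⌊c * Real.logb (1 / r) x⌋₊ = r ^ (⌊c * Real.logb (1 / r) x⌋₊ : ℝ) :=
        (Real.rpow_natCast r _).symm
    _ ≤ r ^ (c * Real.logb (1 / r) x - 1) :=
        Real.rpow_le_rpow_of_exponent_ge hr0 hr1.le
          (by linarith [Nat.lt_floor_add_one (c * Real.logb (1 / r) x)])
    _ = r⁻¹ * x ^ (-c) := by rw [Real.rpow_sub hr0, Real.rpow_one, hry, div_eq_inv_mul]

lemma pow_mul_pow_floor_mul_logb_le {r ε : ℝ} (hr0 : 0 < r) (hr1 : r < 1) (T : ℕ) {k : ℝ}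
    (hk : 0 < k) :
    k ^ T * r ^ ⌊(1 + ε) * Real.logb (1 / r) (k ^ T)⌋₊ ≤ r⁻¹ * k ^ (-(T * ε)) := by
  calc k ^ T * r ^ ⌊(1 + ε) * Real.logb (1 / r) (k ^ T)⌋₊
      ≤ k ^ T * (r⁻¹ * (k ^ T) ^ (-(1 + ε))) := by
        gcongr; exact pow_floor_mul_logb_inv_le hr0 hr1 (by positivity)
    _ = r⁻¹ * k ^ (-(T * ε)) := by
        rw [← Real.rpow_natCast, ← Real.rpow_mul hk.le, mul_left_comm, ← Real.rpow_add hk]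
        ring_nf

theorem summable_prob_A_and_limsup_zero_general
    {Ω : Type*} [MeasurableSpace Ω] (μ : Measure Ω) [IsProbabilityMeasure μ]
    (p q : ℝ) (hp0 : 0 < p) (hp1 : p < 1) (hq : q = 1 - p)
    (X : ℕ → Ω → ℕ)
    (hmeas : ∀ i, Measurable (X i))
    (hval : ∀ i ω, X i ω ≤ 1)
    (hdist : ∀ i, μ {ω | X i ω = 1} = ENNReal.ofReal p)
    (hindep : iIndepFun X μ)
    (T : ℕ) (ε : ℝ) (hT : 1 < (T : ℝ) * ε)
    (u : ℕ → ℕ)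
    (hu : ∀ k : ℕ, u k = (⌊(1 + ε) * Real.logb (1 / Real.sqrt (p * q)) ((k : ℝ) ^ T)⌋).toNat + 1)
    (A : ℕ → Set Ω)
    (hA : ∀ k : ℕ, A k =
      {ω | ∃ i : ℕ, 1 ≤ i ∧ i ≤ k ^ T - u k + 1 ∧ switchCount X (u k) i ω = u k - 1}) :
    (Summable fun k : ℕ => (μ (A (k + 1))).toReal) ∧
      μ (Filter.limsup (fun k : ℕ => A (k + 1)) atTop) = 0 := by
  subst hq
  set r := √(p * (1 - p))
  have hr0 : 0 < r := Real.sqrt_pos.mpr (mul_pos hp0 (by linarith))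
  have hr1 : r < 1 := (Real.sqrt_lt' one_pos).mpr (by nlinarith)
  have hpow : Summable fun k : ℕ ↦ ((k + 1 : ℕ) : ℝ) ^ (-(T * ε)) :=
    (summable_nat_add_iff 1).mpr (Real.summable_nat_rpow.mpr (by linarith))
  refine summable_toReal_and_measure_limsup_eq_zero ((hpow.mul_left r⁻¹).mul_left 2)
    (fun k ↦ by positivity) fun k ↦ ?_
  have hpos : (0 : ℝ) < (k + 1 : ℕ) := by positivity
  have hM : ((k + 1) ^ T - u (k + 1) + 1 : ℕ) ≤ ((k + 1 : ℕ) : ℝ) ^ T := by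
    have : 1 ≤ (k + 1) ^ T := Nat.one_le_pow _ _ k.succ_pos
    exact_mod_cast (show (k + 1) ^ T - u (k + 1) + 1 ≤ (k + 1) ^ T by rw [hu]; omega)
  have hexp : u (k + 1) - 1 = ⌊(1 + ε) * Real.logb (1 / r) (((k + 1 : ℕ) : ℝ) ^ T)⌋₊ := by
    rw [hu, Nat.add_sub_cancel, Int.floor_toNat]
  rw [hA]
  refine (measure_exists_switchCount_eq_le hindep hmeas hval hdist hp0.le hp1.le _ _).trans
    (ENNReal.ofReal_le_ofReal ?_)
  rw [hexp, mul_left_comm]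
  exact mul_le_mul_of_nonneg_left ((mul_le_mul_of_nonneg_right hM (by positivity)).trans
    (pow_mul_pow_floor_mul_logb_le hr0 hr1 T hpos)) zero_le_two

theorem summable_prob_A_and_limsup_zero
    {Ω : Type*} [MeasurableSpace Ω] (μ : Measure Ω) [IsProbabilityMeasure μ]
    (p q : ℝ) (hp0 : 0 < p) (hp1 : p < 1) (hq : q = 1 - p)
    (X : ℕ → Ω → ℕ)
    (hmeas : ∀ i, Measurable (X i))
    (hval : ∀ i ω, X i ω ≤ 1)
    (hdist : ∀ i, μ {ω | X i ω = 1} = ENNReal.ofReal p)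
    (hindep : iIndepFun X μ)
    (T : ℕ) (ε : ℝ) (hε : 0 < ε) (hT : 1 < (T : ℝ) * ε)
    (u : ℕ → ℕ)
    (hu : ∀ k : ℕ, u k = (⌊(1 + ε) * Real.logb (1 / Real.sqrt (p * q)) ((k : ℝ) ^ T)⌋).toNat + 1)
    (A : ℕ → Set Ω)
    (hA : ∀ k : ℕ, A k =
      {ω | ∃ i : ℕ, 1 ≤ i ∧ i ≤ k ^ T - u k + 1 ∧ switchCount X (u k) i ω = u k - 1}) :
    (Summable fun k : ℕ => (μ (A (k + 1))).toReal) ∧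
      μ (Filter.limsup (fun k : ℕ => A (k + 1)) atTop) = 0 :=
  summable_prob_A_and_limsup_zero_general μ p q hp0 hp1 hq X hmeas hval hdist hindep T ε hT u hu A
    hA
end
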